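/- arXiv:2605.08676 — 7 statements merged into one kernel-verified Lean document; each statement's English description precedes it below -/
import Mathlib

section
/- Let F be a k-moonflower-free family of subsets of [n], each of size at most w. Then |⋃_{S ∈ F} S| ≤ (k-1)·w. -/
def IsMoonflower {α : Type*} [DecidableEq α] {k : ℕ} (S : Fin k → Finset α) : Prop :=
  ∃ I : Finset α, (∀ i, (S i \ I).Nonempty) ∧
    ∀ i j, i ≠ j → Disjoint (S i \ I) (S j \ I)

def MoonflowerFree {α : Type*} [DecidableEq α] (k : ℕ) (F : Finset (Finset α)) : Prop :=
  ¬ ∃ S : Fin k → Finset α, Function.Injective S ∧ (∀ i, S i ∈ F) ∧ IsMoonflower S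

/-- A `k`-moonflower-free family of `w`-sets has support of size at most `(k-1)·w`. -/
theorem support_bound_of_moonflowerFree {n k w : ℕ} (F : Finset (Finset (Fin n)))
    (hw : ∀ S ∈ F, S.card ≤ w) (h : MoonflowerFree k F) :
    (F.sup id).card ≤ (k - 1) * w := by
  classical
  set C := F.powerset.filter (fun G => G.sup id = F.sup id) with hC
  have hFC : F ∈ C := by simp [hC]
  obtain ⟨G, hGC, hGmin⟩ := C.exists_min_image Finset.card ⟨F, hFC⟩
  simp only [hC, Finset.mem_filter, Finset.mem_powerset] at hGC
  obtain ⟨hGF, hGsup⟩ := hGC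
  -- every member of G has a private element
  have hrep : ∀ S ∈ G, ∃ x, x ∈ S ∧ ∀ T ∈ G, T ≠ S → x ∉ T := by
    intro S hS
    have hlt : (G.erase S).card < G.card := Finset.card_erase_lt_of_mem hS
    have hne : (G.erase S).sup id ≠ G.sup id := by
      intro heq
      have hmem : G.erase S ∈ C := by
        simp only [hC, Finset.mem_filter, Finset.mem_powerset]
        exact ⟨(Finset.erase_subset _ _).trans hGF, heq.trans hGsup⟩
      have := hGmin _ hmem
      omega
    have hsub : (G.erase S).sup id ⊆ G.sup id :=
      Finset.sup_mono (Finset.erase_subset _ _)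
    obtain ⟨x, hx1, hx2⟩ := Finset.exists_of_ssubset (hsub.ssubset_of_ne hne)
    obtain ⟨T, hT, hxT⟩ := Finset.mem_sup.mp hx1
    have hxS : x ∈ S := by
      by_contra hxS
      exact hx2 (Finset.mem_sup.mpr ⟨T, Finset.mem_erase.mpr
        ⟨fun hTS => hxS (hTS ▸ hxT), hT⟩, hxT⟩)
    refine ⟨x, hxS, fun T' hT' hT'S hxT' => ?_⟩
    exact hx2 (Finset.mem_sup.mpr ⟨T', Finset.mem_erase.mpr ⟨hT'S, hT'⟩, hxT'⟩)
  -- |G| < k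
  have hGk : ¬ k ≤ G.card := by
    intro hk
    obtain ⟨t, htG, htcard⟩ := Finset.exists_subset_card_eq hk
    let S : Fin k → Finset (Fin n) := fun i => (t.equivFin.symm (Fin.cast htcard.symm i) : Finset (Fin n))
    have hSinj : Function.Injective S := by
      intro i j hij
      have := t.equivFin.symm.injective (Subtype.val_injective hij)
      simpa [Fin.ext_iff] using this
    have hSG : ∀ i, S i ∈ G := fun i => htG (t.equivFin.symm (Fin.cast htcard.symm i)).2
    have hSF : ∀ i, S i ∈ F := fun i => hGF (hSG i)
    let x : Fin k → Fin n := fun i => (hrep (S i) (hSG i)).choose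
    have hx1 : ∀ i, x i ∈ S i := fun i => (hrep (S i) (hSG i)).choose_spec.1
    have hx2 : ∀ i, ∀ T ∈ G, T ≠ S i → x i ∉ T :=
      fun i => (hrep (S i) (hSG i)).choose_spec.2
    refine h ⟨S, hSinj, hSF, (Finset.univ : Finset (Fin n)) \ Finset.univ.image x, ?_, ?_⟩
    · intro i
      refine ⟨x i, Finset.mem_sdiff.mpr ⟨hx1 i, ?_⟩⟩
      simp [Finset.mem_sdiff]
    · intro i j hij
      rw [Finset.disjoint_left]
      intro a hai haj
      rw [Finset.mem_sdiff] at hai haj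
      have haimg : a ∈ Finset.univ.image x := by
        by_contra hc
        exact hai.2 (Finset.mem_sdiff.mpr ⟨Finset.mem_univ a, hc⟩)
      obtain ⟨l, -, hl⟩ := Finset.mem_image.mp haimg
      have h1 : S i = S l := by
        by_contra hne
        exact hx2 l (S i) (hSG i) (Ne.symm hne ∘ Eq.symm) (hl ▸ hai.1)
      have h2 : S j = S l := by
        by_contra hne
        exact hx2 l (S j) (hSG j) (Ne.symm hne ∘ Eq.symm) (hl ▸ haj.1)
      exact hij (hSinj (h1.trans h2.symm))
  -- conclude
  have hcard : (G.sup id).card ≤ G.card * w := by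
    rw [Finset.sup_eq_biUnion]
    calc (G.biUnion id).card ≤ ∑ S ∈ G, (id S).card := Finset.card_biUnion_le
      _ ≤ G.card * w := by
          rw [← smul_eq_mul]
          exact Finset.sum_le_card_nsmul G _ w (fun S hS => hw S (hGF hS))
  calc (F.sup id).card = (G.sup id).card := by rw [hGsup]
    _ ≤ G.card * w := hcard
    _ ≤ (k - 1) * w := Nat.mul_le_mul_right w (by omega)
end

section
/- The family F of all w-element subsets of [k+w-2] has size binomial(k+w-2, w) and contains no k-moonflower. Consequently, the maximum size of a k-moonflower-free family of w-sets is at least binomial(k+w-2, w). -/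
/-- Lower bound: the family of all `w`-element subsets of a universe of size `k+w-2`
has size `binomial (k+w-2) w` and is `k`-moonflower-free. -/
theorem moonflower_lower_bound (k w : ℕ) (hk : 1 ≤ k) (hw : 1 ≤ w) :
    ((Finset.range (k + w - 2)).powersetCard w).card = (k + w - 2).choose w ∧
    MoonflowerFree k ((Finset.range (k + w - 2)).powersetCard w) := by
  constructor
  · rw [Finset.card_powersetCard, Finset.card_range]
  · rintro ⟨S, hinj, hmem, I, hne, hdisj⟩
    have hS : ∀ i, S i ⊆ Finset.range (k + w - 2) ∧ (S i).card = w := by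
      intro i
      have := hmem i
      rwa [Finset.mem_powersetCard] at this
    set i0 : Fin k := ⟨0, hk⟩ with hi0
    set D : Fin k → Finset ℕ := fun i => S i \ I with hD
    -- the biUnion of the D i
    have hdisj' : ∀ i ∈ (Finset.univ : Finset (Fin k)), ∀ j ∈ Finset.univ,
        i ≠ j → Disjoint (D i) (D j) := fun i _ j _ h => hdisj i j h
    have hcardU : ((Finset.univ : Finset (Fin k)).biUnion D).card
        = ∑ i, (D i).card := Finset.card_biUnion hdisj'
    -- S i0 ∩ I is disjoint from the biUnion
    have hdisj2 : Disjoint (S i0 ∩ I) ((Finset.univ : Finset (Fin k)).biUnion D) := by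
      rw [Finset.disjoint_biUnion_right]
      intro j _
      exact (Finset.sdiff_disjoint.mono_right Finset.inter_subset_right).symm
    -- everything lives in range (k+w-2)
    have hsub : (S i0 ∩ I) ∪ (Finset.univ : Finset (Fin k)).biUnion D
        ⊆ Finset.range (k + w - 2) := by
      apply Finset.union_subset
      · exact Finset.inter_subset_left.trans (hS i0).1
      · intro x hx
        rw [Finset.mem_biUnion] at hx
        obtain ⟨j, _, hxj⟩ := hx
        exact (hS j).1 (Finset.sdiff_subset hxj)
    have hle : (S i0 ∩ I).card + ∑ i, (D i).card ≤ k + w - 2 := by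
      calc (S i0 ∩ I).card + ∑ i, (D i).card
          = ((S i0 ∩ I) ∪ (Finset.univ : Finset (Fin k)).biUnion D).card := by
            rw [Finset.card_union_of_disjoint hdisj2, hcardU]
        _ ≤ (Finset.range (k + w - 2)).card := Finset.card_le_card hsub
        _ = k + w - 2 := Finset.card_range _
    -- |S i0 ∩ I| + |D i0| = w
    have hsplit : (S i0 ∩ I).card + (D i0).card = w := by
      rw [hD, Finset.card_inter_add_card_sdiff]
      exact (hS i0).2
    -- sum lower bound
    have hsum : (D i0).card + (k - 1) ≤ ∑ i, (D i).card := by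
      rw [← Finset.add_sum_erase _ _ (Finset.mem_univ i0)]
      apply Nat.add_le_add_left
      calc k - 1 = (Finset.univ.erase i0).card := by
            rw [Finset.card_erase_of_mem (Finset.mem_univ i0), Finset.card_univ, Fintype.card_fin]
        _ = ∑ _i ∈ Finset.univ.erase i0, 1 := by rw [Finset.card_eq_sum_ones]
        _ ≤ ∑ i ∈ Finset.univ.erase i0, (D i).card :=
            Finset.sum_le_sum fun i _ => (hne i).card_pos
    omega
end

section
/- Let C ⊆ {0,1}^n be a binary code and let F_C := {supp(c) : c ∈ C} be its support family. Then the size of the largest moonflower contained in F_C equals the non-redundancy NRD(C). -/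
/-- The support of a codeword `c ∈ {0,1}^n`. -/
def codeSupp {n : ℕ} (c : Fin n → Bool) : Finset (Fin n) :=
  Finset.univ.filter (fun i => c i = true)

/-- `NRD(C) = MF(F_C)`: for a binary code `C ⊆ {0,1}^n` with support family
`F_C = {supp c : c ∈ C}`, the size of the largest moonflower contained in `F_C`
equals the non-redundancy of `C`. -/
theorem MF_eq_NRD {n : ℕ} (C : Finset (Fin n → Bool)) :
    sSup {m : ℕ | ∃ S : Fin m → Finset (Fin n), Function.Injective S ∧
        (∀ t, S t ∈ C.image codeSupp) ∧ IsMoonflower S}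
      =
    sSup {m : ℕ | ∃ I : Finset (Fin n), I.card = m ∧
        ∀ i ∈ I, ∃ c ∈ C, c i = true ∧ ∀ j ∈ I, j ≠ i → c j = false} := by
  congr 1
  ext m
  simp only [Set.mem_setOf_eq]
  constructor
  · rintro ⟨S, hinj, hmem, I, hne, hdisj⟩
    choose x hx using hne
    have hxS : ∀ t, x t ∈ S t := fun t => (Finset.mem_sdiff.mp (hx t)).1
    have hxI : ∀ t, x t ∉ I := fun t => (Finset.mem_sdiff.mp (hx t)).2
    have hxinj : Function.Injective x := by
      intro t s h
      by_contra hts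
      exact (Finset.disjoint_left.mp (hdisj t s hts) (hx t)) (h ▸ hx s)
    refine ⟨Finset.univ.image x, by
      rw [Finset.card_image_of_injective _ hxinj, Finset.card_univ, Fintype.card_fin], ?_⟩
    intro i hi
    obtain ⟨t, -, rfl⟩ := Finset.mem_image.mp hi
    obtain ⟨c, hc, hcs⟩ := Finset.mem_image.mp (hmem t)
    refine ⟨c, hc, ?_, ?_⟩
    · have : x t ∈ codeSupp c := hcs ▸ hxS t
      simpa [codeSupp] using this
    · intro j hj hji
      obtain ⟨s, -, rfl⟩ := Finset.mem_image.mp hj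
      have hst : s ≠ t := fun h => hji (h ▸ rfl)
      by_contra hcj
      have hcj' : c (x s) = true := by simpa using hcj
      have hxsSt : x s ∈ S t := by rw [← hcs]; simp [codeSupp, hcj']
      exact Finset.disjoint_left.mp (hdisj s t hst) (hx s)
        (Finset.mem_sdiff.mpr ⟨hxsSt, hxI s⟩)
  · rintro ⟨I, hm, hnrd⟩
    choose! c hcC hci hcj using hnrd
    let e : Fin m → {x // x ∈ I} := fun t => I.equivFin.symm (Fin.cast hm.symm t)
    have heinj : Function.Injective e :=
      I.equivFin.symm.injective.comp (Fin.cast_injective _)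
    have heinj' : Function.Injective (fun t => ((e t : Fin n))) :=
      Subtype.coe_injective.comp heinj
    set S : Fin m → Finset (Fin n) := fun t => codeSupp (c (e t)) with hS
    have key : ∀ t, S t \ Iᶜ = {(e t : Fin n)} := by
      intro t
      ext y
      simp only [Finset.mem_sdiff, Finset.mem_compl, not_not, Finset.mem_singleton,
        hS, codeSupp, Finset.mem_filter, Finset.mem_univ, true_and]
      constructor
      · rintro ⟨hcy, hyI⟩
        by_contra hne
        exact absurd hcy (by simp [hcj (e t) (e t).2 y hyI hne])
      · rintro rfl
        exact ⟨hci (e t) (e t).2, (e t).2⟩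
    refine ⟨S, ?_, ?_, Iᶜ, ?_, ?_⟩
    · intro t s h
      have : ({(e t : Fin n)} : Finset (Fin n)) = {(e s : Fin n)} := by
        rw [← key t, ← key s, h]
      exact heinj' (by simpa using this)
    · intro t
      exact Finset.mem_image.mpr ⟨c (e t), hcC (e t) (e t).2, rfl⟩
    · intro t; rw [key t]; exact ⟨_, Finset.mem_singleton_self _⟩
    · intro t s hts
      rw [key t, key s]
      simpa [Finset.disjoint_singleton] using fun h => hts (heinj h)
end

section
/- Let F be a family of sets over [n] that is k-moonflower-free. Then the VC dimension of the union-closure U(F) := {∪_{t=1}^r S_t : r ≥ 0, S_t ∈ F} is at most k-1. -/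
/-- The union-closure of a family: all finite unions of its members (including the
empty union). -/
def unionClosure {n : ℕ} (F : Finset (Finset (Fin n))) : Set (Finset (Fin n)) :=
  {U | ∃ (r : ℕ) (T : Fin r → Finset (Fin n)), (∀ t, T t ∈ F) ∧ U = Finset.univ.sup T}

/-- `S` is shattered by a family `H` if every subset of `S` arises as `T ∩ S` for
some `T ∈ H`. -/
def ShatteredBy {n : ℕ} (H : Set (Finset (Fin n))) (S : Finset (Fin n)) : Prop :=
  ∀ B ⊆ S, ∃ T ∈ H, T ∩ S = B

/-- If `F` is `k`-moonflower-free then the VC dimension of its union-closure is at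
most `k - 1`: every set shattered by `U(F)` has size at most `k - 1`. -/
theorem vc_unionClosure_le {n k : ℕ} (F : Finset (Finset (Fin n)))
    (h : MoonflowerFree k F) :
    ∀ S : Finset (Fin n), ShatteredBy (unionClosure F) S → S.card ≤ k - 1 := by
  intro S hS
  -- k = 0 : MoonflowerFree 0 is false
  rcases Nat.eq_zero_or_pos k with hk | hk
  · exfalso
    subst hk
    exact h ⟨Fin.elim0, fun i => i.elim0, fun i => i.elim0,
      ⟨∅, fun i => i.elim0, fun i => i.elim0⟩⟩
  by_contra hcard
  push_neg at hcard
  have hk' : k ≤ S.card := by omega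
  obtain ⟨T, hTS, hTcard⟩ := Finset.exists_subset_card_eq hk'
  -- x : Fin k → Fin n, injective, values in S
  let e := T.equivFinOfCardEq hTcard
  let x : Fin k → Fin n := fun i => (e.symm i : Fin n)
  have hxinj : Function.Injective x := fun i j hij => by
    have := Subtype.ext hij
    simpa using e.symm.injective this
  have hxS : ∀ i, x i ∈ S := fun i => hTS (e.symm i).2
  -- for each i, a member of F whose trace on S is {x i}
  have key : ∀ i : Fin k, ∃ A ∈ F, A ∩ S = {x i} := by
    intro i
    obtain ⟨U, hU, hUS⟩ := hS {x i} (Finset.singleton_subset_iff.2 (hxS i))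
    obtain ⟨r, Tf, hTf, rfl⟩ := hU
    have hxU : x i ∈ Finset.univ.sup Tf := by
      have : x i ∈ Finset.univ.sup Tf ∩ S := by rw [hUS]; exact Finset.mem_singleton_self _
      exact (Finset.mem_inter.1 this).1
    rw [Finset.mem_sup] at hxU
    obtain ⟨t, -, hxt⟩ := hxU
    refine ⟨Tf t, hTf t, ?_⟩
    apply Finset.Subset.antisymm
    · calc Tf t ∩ S ⊆ Finset.univ.sup Tf ∩ S :=
            Finset.inter_subset_inter (Finset.le_sup (Finset.mem_univ t)) le_rfl
        _ = {x i} := hUS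
    · exact Finset.singleton_subset_iff.2 (Finset.mem_inter.2 ⟨hxt, hxS i⟩)
  choose A hAF hAS using key
  apply h
  have hsd : ∀ i, A i \ Sᶜ = {x i} := by
    intro i
    rw [← hAS i]
    ext y
    simp [Finset.mem_sdiff, Finset.mem_inter, Finset.mem_compl]
  refine ⟨A, ?_, hAF, Sᶜ, ?_, ?_⟩
  · intro i j hij
    have : ({x i} : Finset (Fin n)) = {x j} := by rw [← hAS i, ← hAS j, hij]
    exact hxinj (Finset.singleton_injective this)
  · intro i; rw [hsd i]; exact Finset.singleton_nonempty _
  · intro i j hij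
    rw [hsd i, hsd j]
    simp only [Finset.disjoint_singleton]
    exact fun hxx => hij (hxinj hxx)
end

section
/- Let F ⊆ 2^[n] be a finite family and p ∈ (0,1). Suppose every p-smooth distribution supported on F has Shannon entropy at most H. Then there exists S ⊆ F with |S| ≤ 2^H such that F \ S is p-covered. -/
open Real Finset


lemma dualityQ {n : ℕ} (hn : 0 < n) (p : ℝ) (hp1 : p < 1)
    (G : Finset (Finset (Fin n)))
    (hno : ¬ ∃ D : Finset (Fin n) → ℝ, (∀ T, 0 ≤ D T) ∧ (∀ T, T ∉ G → D T = 0) ∧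
      (∑ T ∈ G, D T) = 1 ∧ ∀ i : Fin n, (∑ T ∈ G, if i ∈ T then D T else 0) ≤ p) :
    ∃ Q : Fin n → ℝ, (∀ i, 0 ≤ Q i) ∧ (∑ i, Q i) = 1 ∧
      ∀ T ∈ G, p ≤ ∑ i ∈ T, Q i := by
  rcases G.eq_empty_or_nonempty with rfl | hGne
  · refine ⟨fun _ => 1 / n, fun i => by positivity, ?_, by simp⟩
    rw [Finset.sum_const, Finset.card_univ, Fintype.card_fin]
    rw [nsmul_eq_mul, mul_one_div_cancel (Nat.cast_ne_zero.mpr hn.ne')]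
  -- indicator vectors
  set v : Finset (Fin n) → (Fin n → ℝ) := fun T i => if i ∈ T then 1 else 0 with hv
  have hvinj : Set.InjOn v ↑G := by
    intro T _ T' _ h
    ext i
    have := congrFun h i
    simp only [hv] at this
    by_cases hi : i ∈ T <;> by_cases hi' : i ∈ T' <;> simp_all
  set s : Finset (Fin n → ℝ) := G.image v with hs
  set C : Set (Fin n → ℝ) := convexHull ℝ ↑s with hC
  set K : Set (Fin n → ℝ) := {x | ∀ i, x i ≤ p} with hK
  have hKclosed : IsClosed K := by
    have : K = ⋂ i, {x : Fin n → ℝ | x i ≤ p} := by ext x; simp [hK]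
    rw [this]
    exact isClosed_iInter fun i => isClosed_le (continuous_apply i) continuous_const
  have hKconv : Convex ℝ K := by
    intro x hx y hy a b ha hb hab
    intro i
    simp only [Pi.add_apply, Pi.smul_apply, smul_eq_mul]
    calc a * x i + b * y i ≤ a * p + b * p := by
          exact add_le_add (mul_le_mul_of_nonneg_left (hx i) ha)
            (mul_le_mul_of_nonneg_left (hy i) hb)
      _ = p := by rw [← add_mul, hab, one_mul]
  have hCconv : Convex ℝ C := convex_convexHull ℝ _
  have hCcomp : IsCompact C := (s.finite_toSet).isCompact_convexHull (𝕜 := ℝ)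
  have hdisj : Disjoint K C := by
    rw [Set.disjoint_right]
    intro x hxC hxK
    rw [hC, Finset.mem_convexHull] at hxC
    obtain ⟨w, hw0, hw1, hwx⟩ := hxC
    refine hno ⟨fun T => if T ∈ G then w (v T) else 0, ?_, ?_, ?_, ?_⟩
    · intro T
      by_cases h : T ∈ G
      · simpa [h] using hw0 (v T) (Finset.mem_image_of_mem v h)
      · simp [h]
    · intro T h; simp [h]
    · have h1 : (∑ T ∈ G, if T ∈ G then w (v T) else 0) = ∑ T ∈ G, w (v T) :=
        Finset.sum_congr rfl fun T hT => if_pos hT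
      rw [hs, Finset.sum_image (fun a ha b hb h => hvinj ha hb h)] at hw1
      rw [h1]; exact hw1
    · intro i
      have hx : x = ∑ y ∈ s, w y • y := by
        rw [← hwx, Finset.centerMass, hw1, inv_one, one_smul]
        simp
      have hxi : x i = ∑ T ∈ G, (if i ∈ T then w (v T) else 0) := by
        rw [hx]
        rw [hs, Finset.sum_image (fun a ha b hb h => hvinj ha hb h)]
        rw [Finset.sum_apply]
        refine Finset.sum_congr rfl fun T hT => ?_
        simp only [Pi.smul_apply, smul_eq_mul, hv]
        by_cases hi : i ∈ T <;> simp [hi]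
      calc (∑ T ∈ G, if i ∈ T then (if T ∈ G then w (v T) else 0) else 0)
          = ∑ T ∈ G, (if i ∈ T then w (v T) else 0) := by
            refine Finset.sum_congr rfl fun T hT => ?_
            simp [hT]
        _ = x i := hxi.symm
        _ ≤ p := hxK i
  obtain ⟨f, u, w, hfK, huw, hfC⟩ :=
    geometric_hahn_banach_closed_compact hKconv hKclosed hCconv hCcomp hdisj
  set c : Fin n → ℝ := fun i => f (Pi.single i 1) with hc
  have hf_eq : ∀ x : Fin n → ℝ, f x = ∑ i, x i * c i := by
    intro x
    have hx : x = ∑ i, Pi.single i (x i) := (Finset.univ_sum_single x).symm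
    conv_lhs => rw [hx]
    rw [map_sum]
    refine Finset.sum_congr rfl fun i _ => ?_
    have hsingle : Pi.single i (x i) = (x i) • (Pi.single i 1 : Fin n → ℝ) := by
      funext j; by_cases h : j = i <;> simp [Pi.single_apply, h]
    rw [hsingle, map_smul]; simp [hc]
  -- constant p vector is in K
  have hpK : (fun _ : Fin n => p) ∈ K := fun i => le_refl p
  have hpc : p * ∑ i, c i < u := by
    have := hfK _ hpK
    rwa [hf_eq, ← Finset.mul_sum] at this
  have hcnn : ∀ i, 0 ≤ c i := by
    intro i
    by_contra hci
    push_neg at hci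
    set t : ℝ := (u - p * ∑ j, c j + 1) / (-c i) with ht
    have htpos : 0 < t := by
      apply div_pos; linarith; linarith
    have hmem : (fun j => p - (if j = i then t else 0)) ∈ K := by
      intro j
      by_cases h : j = i <;> simp [h] <;> linarith
    have h2 := hfK _ hmem
    rw [hf_eq] at h2
    have hval : (∑ j, (p - (if j = i then t else 0)) * c j)
        = p * (∑ j, c j) - t * c i := by
      have he : ∀ j, (p - (if j = i then t else 0)) * c j
          = p * c j - (if j = i then t * c j else 0) := by
        intro j; by_cases h : j = i <;> simp [h] <;> ring
      simp_rw [he]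
      rw [Finset.sum_sub_distrib, Finset.mul_sum,
        Finset.sum_ite_eq' Finset.univ i (fun j => t * c j)]
      simp
    rw [hval] at h2
    have hne : -c i ≠ 0 := by linarith
    have h3 : t * (-c i) = u - p * ∑ j, c j + 1 := by
      rw [ht, div_mul_cancel₀ _ hne]
    rw [mul_neg] at h3
    linarith
  have hcov : ∀ T ∈ G, p * (∑ i, c i) < ∑ i ∈ T, c i := by
    intro T hT
    have hvC : v T ∈ C := subset_convexHull ℝ _ (by
      exact_mod_cast Finset.mem_image_of_mem v hT)
    have := hfC _ hvC
    have hfvT : f (v T) = ∑ i ∈ T, c i := by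
      rw [hf_eq]
      rw [show (∑ i, v T i * c i) = ∑ i, (if i ∈ T then c i else 0) by
        refine Finset.sum_congr rfl fun i _ => ?_
        simp only [hv]; by_cases h : i ∈ T <;> simp [h]]
      simp [Finset.sum_ite_mem]
    rw [hfvT] at this
    linarith
  have hsumpos : 0 < ∑ i, c i := by
    obtain ⟨T, hT⟩ := hGne
    have h1 := hcov T hT
    have h2 : ∑ i ∈ T, c i ≤ ∑ i, c i :=
      Finset.sum_le_sum_of_subset_of_nonneg (Finset.subset_univ T)
        (fun i _ _ => hcnn i)
    nlinarith [Finset.sum_nonneg (fun i (_ : i ∈ Finset.univ) => hcnn i)]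
  refine ⟨fun i => c i / ∑ j, c j, fun i => div_nonneg (hcnn i) hsumpos.le, ?_, ?_⟩
  · rw [← Finset.sum_div, div_self hsumpos.ne']
  · intro T hT
    rw [← Finset.sum_div, le_div_iff₀ hsumpos]
    exact (hcov T hT).le


lemma phi_continuous : Continuous fun x : ℝ => x * Real.logb 2 (1 / x) := by
  have h : (fun x : ℝ => x * Real.logb 2 (1 / x))
      = fun x => (x * Real.log x) * (-(Real.log 2)⁻¹) := by
    funext x
    rw [Real.logb, one_div, Real.log_inv]
    ring
  rw [h]
  exact Real.continuous_mul_log.mul continuous_const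

lemma phi_tangent {a x : ℝ} (ha : 0 ≤ a) (hx : 0 < x) :
    (x - a) * (Real.logb 2 (1 / x) - 1 / Real.log 2)
      ≤ x * Real.logb 2 (1 / x) - a * Real.logb 2 (1 / a) := by
  have hl2 : (0:ℝ) < Real.log 2 := Real.log_pos one_lt_two
  have key : (x - a) * (-Real.log x - 1) ≤ x * (-Real.log x) - a * (-Real.log a) := by
    rcases eq_or_lt_of_le ha with h | h
    · rw [← h]
      nlinarith [hx.le]
    · have h1 : Real.log (x / a) ≤ x / a - 1 :=
        Real.log_le_sub_one_of_pos (div_pos hx h)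
      rw [Real.log_div hx.ne' h.ne'] at h1
      have h2 : a * (Real.log x - Real.log a) ≤ x - a := by
        have h3 := mul_le_mul_of_nonneg_left h1 h.le
        have h4 : a * (x / a - 1) = x - a := by field_simp
        linarith [h4 ▸ h3]
      nlinarith
  have e1 : Real.logb 2 (1 / x) = -Real.log x / Real.log 2 := by
    rw [Real.logb, one_div, Real.log_inv]
  have e2 : Real.logb 2 (1 / a) = -Real.log a / Real.log 2 := by
    rw [Real.logb, one_div, Real.log_inv]
  rw [e1, e2]
  calc (x - a) * (-Real.log x / Real.log 2 - 1 / Real.log 2)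
      = ((x - a) * (-Real.log x - 1)) / Real.log 2 := by ring
    _ ≤ (x * (-Real.log x) - a * (-Real.log a)) / Real.log 2 :=
        (div_le_div_iff_of_pos_right hl2).mpr key
    _ = x * (-Real.log x / Real.log 2) - a * (-Real.log a / Real.log 2) := by ring


set_option maxHeartbeats 2000000 in

/-- Coverability from entropy-bounded smoothness: if every `p`-smooth distribution
supported on `F` has Shannon entropy at most `H`, then removing at most `2^H` sets
from `F` leaves a `p`-covered family. -/
theorem coverability_from_smoothness {n : ℕ} (hn : 0 < n)
    (F : Finset (Finset (Fin n))) (p H : ℝ) (hp0 : 0 < p) (hp1 : p < 1)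
    (hent : ∀ D : Finset (Fin n) → ℝ,
      (∀ T, 0 ≤ D T) → (∀ T, T ∉ F → D T = 0) → (∑ T ∈ F, D T) = 1 →
      (∀ i : Fin n, (∑ T ∈ F, if i ∈ T then D T else 0) ≤ p) →
      (∑ T ∈ F, D T * Real.logb 2 (1 / D T)) ≤ H) :
    ∃ S ⊆ F, (S.card : ℝ) ≤ (2 : ℝ) ^ H ∧
      ∃ Q : Fin n → ℝ, (∀ i, 0 ≤ Q i) ∧ (∑ i, Q i) = 1 ∧
        ∀ T ∈ F \ S, p ≤ ∑ i ∈ T, Q i := by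
  classical
  have ht2pos : (0:ℝ) < (2:ℝ) ^ H := Real.rpow_pos_of_pos two_pos H
  set P : Set (Finset (Fin n) → ℝ) := {D | (∀ T, 0 ≤ D T) ∧ (∀ T, T ∉ F → D T = 0) ∧
      (∑ T ∈ F, D T) = 1 ∧ ∀ i : Fin n, (∑ T ∈ F, if i ∈ T then D T else 0) ≤ p} with hPdef
  by_cases hP : P.Nonempty
  swap
  · -- no p-smooth distribution at all : F itself is p-covered
    have hno : ¬ ∃ D : Finset (Fin n) → ℝ, (∀ T, 0 ≤ D T) ∧ (∀ T, T ∉ F → D T = 0) ∧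
        (∑ T ∈ F, D T) = 1 ∧ ∀ i : Fin n, (∑ T ∈ F, if i ∈ T then D T else 0) ≤ p := by
      rintro ⟨D, h1, h2, h3, h4⟩
      exact hP ⟨D, h1, h2, h3, h4⟩
    obtain ⟨Q, hQ0, hQ1, hQc⟩ := dualityQ hn p hp1 F hno
    refine ⟨∅, Finset.empty_subset F, by simpa using ht2pos.le, Q, hQ0, hQ1, ?_⟩
    intro T hT
    exact hQc T (by simpa using hT)
  -- P nonempty: find the max-entropy distribution
  set Ent : (Finset (Fin n) → ℝ) → ℝ := fun D => ∑ T ∈ F, D T * Real.logb 2 (1 / D T)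
    with hEnt
  have hEntCont : Continuous Ent :=
    continuous_finset_sum _ fun T _ => phi_continuous.comp (continuous_apply T)
  have hPsub : P ⊆ Set.pi Set.univ (fun _ : Finset (Fin n) => Set.Icc (0:ℝ) 1) := by
    rintro D ⟨h0, hz, h1, _⟩ T _
    refine ⟨h0 T, ?_⟩
    by_cases hT : T ∈ F
    · calc D T ≤ ∑ T' ∈ F, D T' := Finset.single_le_sum (fun T' _ => h0 T') hT
        _ = 1 := h1
    · rw [hz T hT]; norm_num
  have hPclosed : IsClosed P := by
    have hP1 : IsClosed {D : Finset (Fin n) → ℝ | ∀ T, 0 ≤ D T} := by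
      have : {D : Finset (Fin n) → ℝ | ∀ T, 0 ≤ D T}
          = ⋂ T, {D : Finset (Fin n) → ℝ | 0 ≤ D T} := by ext D; simp
      rw [this]
      exact isClosed_iInter fun T => isClosed_le continuous_const (continuous_apply T)
    have hP2 : IsClosed {D : Finset (Fin n) → ℝ | ∀ T, T ∉ F → D T = 0} := by
      have : {D : Finset (Fin n) → ℝ | ∀ T, T ∉ F → D T = 0}
          = ⋂ T, ⋂ (_ : T ∉ F), {D : Finset (Fin n) → ℝ | D T = 0} := by ext D; simp
      rw [this]
      exact isClosed_iInter fun T => isClosed_iInter fun _ =>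
        isClosed_eq (continuous_apply T) continuous_const
    have hP3 : IsClosed {D : Finset (Fin n) → ℝ | (∑ T ∈ F, D T) = 1} :=
      isClosed_eq (continuous_finset_sum _ fun T _ => continuous_apply T) continuous_const
    have hP4 : IsClosed {D : Finset (Fin n) → ℝ |
        ∀ i : Fin n, (∑ T ∈ F, if i ∈ T then D T else 0) ≤ p} := by
      have : {D : Finset (Fin n) → ℝ | ∀ i : Fin n, (∑ T ∈ F, if i ∈ T then D T else 0) ≤ p}
          = ⋂ i, {D : Finset (Fin n) → ℝ | (∑ T ∈ F, if i ∈ T then D T else 0) ≤ p} := by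
        ext D; simp
      rw [this]
      refine isClosed_iInter fun i => isClosed_le (continuous_finset_sum _ fun T _ => ?_)
        continuous_const
      by_cases h : i ∈ T
      · simpa [h] using continuous_apply T
      · simpa [h] using (continuous_const : Continuous fun _ : Finset (Fin n) → ℝ => (0:ℝ))
    have : P = {D : Finset (Fin n) → ℝ | ∀ T, 0 ≤ D T}
        ∩ ({D | ∀ T, T ∉ F → D T = 0} ∩ ({D | (∑ T ∈ F, D T) = 1}
        ∩ {D | ∀ i : Fin n, (∑ T ∈ F, if i ∈ T then D T else 0) ≤ p})) := by
      ext D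
      simp only [hPdef, Set.mem_setOf_eq, Set.mem_inter_iff]
    rw [this]
    exact hP1.inter (hP2.inter (hP3.inter hP4))
  have hPcomp : IsCompact P :=
    (isCompact_univ_pi fun _ => isCompact_Icc).of_isClosed_subset hPclosed hPsub
  obtain ⟨D, hDP, hDmax⟩ := hPcomp.exists_isMaxOn hP hEntCont.continuousOn
  obtain ⟨hD0, hDz, hD1, hDs⟩ := hDP
  have hDH : Ent D ≤ H := hent D hD0 hDz hD1 hDs
  -- the removed family
  set θ : ℝ := (2:ℝ) ^ (-H) with hθ
  have hθpos : 0 < θ := Real.rpow_pos_of_pos two_pos _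
  have hθt2 : θ * (2:ℝ) ^ H = 1 := by
    rw [hθ, ← Real.rpow_add two_pos]; simp
  set S : Finset (Finset (Fin n)) := F.filter (fun T => θ ≤ D T) with hS
  have hcard : (S.card : ℝ) ≤ (2:ℝ) ^ H := by
    have h1 : (S.card : ℝ) * θ ≤ 1 := by
      calc (S.card : ℝ) * θ = ∑ _T ∈ S, θ := by rw [Finset.sum_const, nsmul_eq_mul]
        _ ≤ ∑ T ∈ S, D T := Finset.sum_le_sum fun T hT => (Finset.mem_filter.mp hT).2
        _ ≤ ∑ T ∈ F, D T := Finset.sum_le_sum_of_subset_of_nonneg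
            (Finset.filter_subset _ _) (fun T _ _ => hD0 T)
        _ = 1 := hD1
    have h2 := mul_le_mul_of_nonneg_right h1 ht2pos.le
    rw [mul_assoc, hθt2, mul_one, one_mul] at h2
    exact h2
  by_cases hD' : ∃ D' : Finset (Fin n) → ℝ, (∀ T, 0 ≤ D' T) ∧ (∀ T, T ∉ F \ S → D' T = 0) ∧
      (∑ T ∈ F \ S, D' T) = 1 ∧ ∀ i : Fin n, (∑ T ∈ F \ S, if i ∈ T then D' T else 0) ≤ p
  swap
  · -- F \ S is p-covered and we are done
    obtain ⟨Q, hQ0, hQ1, hQc⟩ := dualityQ hn p hp1 (F \ S) hD'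
    exact ⟨S, Finset.filter_subset _ _, hcard, Q, hQ0, hQ1, hQc⟩
  -- otherwise derive a contradiction with maximality of entropy
  exfalso
  obtain ⟨D', h'0, h'z, h'1, h's⟩ := hD'
  have hsumF : ∑ T ∈ F, D' T = 1 := by
    rw [← Finset.sum_subset (Finset.sdiff_subset : F \ S ⊆ F)
      (fun T _ hns => h'z T hns)]
    exact h'1
  have hsmoothF : ∀ i : Fin n, (∑ T ∈ F, if i ∈ T then D' T else 0) ≤ p := by
    intro i
    rw [← Finset.sum_subset (Finset.sdiff_subset : F \ S ⊆ F)
      (fun T _ hns => by rw [h'z T hns]; simp)]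
    exact h's i
  have hsupp : ∀ T, D' T ≠ 0 → T ∈ F ∧ D T < θ ∧ 0 < D' T := by
    intro T hT
    have hmem : T ∈ F \ S := by
      by_contra h
      exact hT (h'z T h)
    rw [Finset.mem_sdiff] at hmem
    refine ⟨hmem.1, ?_, lt_of_le_of_ne (h'0 T) (Ne.symm hT)⟩
    have := hmem.2
    rw [hS, Finset.mem_filter] at this
    push_neg at this
    exact this hmem.1
  have hD'le1 : ∀ T, D' T ≤ 1 := by
    intro T
    by_cases h : T ∈ F \ S
    · rw [← h'1]
      exact Finset.single_le_sum (fun T' _ => h'0 T') h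
    · rw [h'z T h]; norm_num
  set Fs : Finset (Finset (Fin n)) := F.filter (fun T => D' T ≠ 0) with hFs
  have hFsne : Fs.Nonempty := by
    rw [Finset.filter_nonempty_iff]
    by_contra h
    push_neg at h
    rw [Finset.sum_congr rfl (fun T hT => h T hT)] at hsumF
    simp at hsumF
  set M : ℝ := Fs.sup' hFsne (fun T => D T) with hM
  have hM0 : 0 ≤ M := by
    obtain ⟨T₀, hT₀⟩ := hFsne
    exact le_trans (hD0 T₀) (Finset.le_sup' _ hT₀)
  have hMθ : M < θ := by
    rw [hM, Finset.sup'_lt_iff]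
    intro T hT
    exact (hsupp T (Finset.mem_filter.mp hT).2).2.1
  have htM : (2:ℝ) ^ H * M < 1 := by
    calc (2:ℝ) ^ H * M < (2:ℝ) ^ H * θ := by
          exact mul_lt_mul_of_pos_left hMθ ht2pos
      _ = 1 := by rw [mul_comm]; exact hθt2
  set ε : ℝ := (1 - (2:ℝ) ^ H * M) / (2 * (1 + (2:ℝ) ^ H)) with hε
  have hden : (0:ℝ) < 2 * (1 + (2:ℝ) ^ H) := by positivity
  have hε0 : 0 < ε := div_pos (by linarith) hden
  have hε1 : ε < 1 := by
    rw [hε, div_lt_one hden]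
    nlinarith [mul_nonneg ht2pos.le hM0]
  have h1ε : 0 < 1 - ε := by linarith
  set Dε : Finset (Fin n) → ℝ := fun T => (1 - ε) * D T + ε * D' T with hDε
  have hDε0 : ∀ T, 0 ≤ Dε T := fun T =>
    add_nonneg (mul_nonneg h1ε.le (hD0 T)) (mul_nonneg hε0.le (h'0 T))
  have hDεz : ∀ T, T ∉ F → Dε T = 0 := by
    intro T hT
    have h2 : T ∉ F \ S := fun h => hT (Finset.mem_sdiff.mp h).1
    rw [hDε]; simp only []
    rw [hDz T hT, h'z T h2]
    ring
  have hDε1 : ∑ T ∈ F, Dε T = 1 := by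
    rw [hDε]; simp only []
    rw [Finset.sum_add_distrib, ← Finset.mul_sum, ← Finset.mul_sum, hD1, hsumF]
    ring
  have hDεs : ∀ i : Fin n, (∑ T ∈ F, if i ∈ T then Dε T else 0) ≤ p := by
    intro i
    have he : ∀ T, (if i ∈ T then Dε T else 0)
        = (1 - ε) * (if i ∈ T then D T else 0) + ε * (if i ∈ T then D' T else 0) := by
      intro T; by_cases h : i ∈ T <;> simp [h, hDε]
    rw [Finset.sum_congr rfl (fun T _ => he T), Finset.sum_add_distrib,
      ← Finset.mul_sum, ← Finset.mul_sum]
    calc (1 - ε) * (∑ T ∈ F, if i ∈ T then D T else 0)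
          + ε * (∑ T ∈ F, if i ∈ T then D' T else 0)
        ≤ (1 - ε) * p + ε * p := add_le_add
          (mul_le_mul_of_nonneg_left (hDs i) h1ε.le)
          (mul_le_mul_of_nonneg_left (hsmoothF i) hε0.le)
      _ = p := by ring
  have hDεP : Dε ∈ P := ⟨hDε0, hDεz, hDε1, hDεs⟩
  have hmax : Ent Dε ≤ Ent D := hDmax hDεP
  -- (A)
  have hA : ∑ T ∈ F, (D' T - D T) * Real.logb 2 (1 / Dε T) ≤ 0 := by
    have tangent_sum : ∑ T ∈ F, (Dε T - D T) * (Real.logb 2 (1 / Dε T) - 1 / Real.log 2)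
        ≤ Ent Dε - Ent D := by
      rw [hEnt]
      simp only []
      rw [← Finset.sum_sub_distrib]
      refine Finset.sum_le_sum fun T _ => ?_
      rcases eq_or_lt_of_le (hDε0 T) with h | h
      · have h' : (1 - ε) * D T + ε * D' T = 0 := h.symm
        have h1 : (1 - ε) * D T = 0 := by
          nlinarith [mul_nonneg h1ε.le (hD0 T), mul_nonneg hε0.le (h'0 T)]
        have hDT : D T = 0 := by
          rcases mul_eq_zero.mp h1 with h2 | h2
          · linarith
          · exact h2
        rw [← h, hDT]
        simp
      · exact phi_tangent (hD0 T) h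
    have hzero : ∑ T ∈ F, (Dε T - D T) = 0 := by
      rw [Finset.sum_sub_distrib, hDε1, hD1]; ring
    have expand : ∑ T ∈ F, (Dε T - D T) * (Real.logb 2 (1 / Dε T) - 1 / Real.log 2)
        = ∑ T ∈ F, (Dε T - D T) * Real.logb 2 (1 / Dε T)
          - (∑ T ∈ F, (Dε T - D T)) * (1 / Real.log 2) := by
      rw [Finset.sum_mul, ← Finset.sum_sub_distrib]
      exact Finset.sum_congr rfl fun T _ => by ring
    have h5 : ∑ T ∈ F, (Dε T - D T) * Real.logb 2 (1 / Dε T) ≤ 0 := by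
      have h7 := tangent_sum
      rw [expand, hzero, zero_mul, sub_zero] at h7
      linarith
    have h6 : ∑ T ∈ F, (Dε T - D T) * Real.logb 2 (1 / Dε T)
        = ε * ∑ T ∈ F, (D' T - D T) * Real.logb 2 (1 / Dε T) := by
      rw [Finset.mul_sum]
      refine Finset.sum_congr rfl fun T _ => ?_
      rw [hDε]; ring
    rw [h6] at h5
    exact le_of_not_gt fun hX => absurd h5 (not_le.mpr (mul_pos hε0 hX))
  -- (B)
  have hB : ∑ T ∈ F, D T * Real.logb 2 (1 / Dε T) ≤ H + Real.logb 2 (1 / (1 - ε)) := by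
    have per : ∀ T ∈ F, D T * Real.logb 2 (1 / Dε T)
        ≤ D T * Real.logb 2 (1 / D T) + D T * Real.logb 2 (1 / (1 - ε)) := by
      intro T _
      rcases eq_or_lt_of_le (hD0 T) with h | h
      · rw [← h]; simp
      · have hDεpos : (0:ℝ) < (1 - ε) * D T := mul_pos h1ε h
        have hle : (1 - ε) * D T ≤ Dε T := by
          rw [hDε]
          simp only []
          nlinarith [h'0 T]
        have hinv : 1 / Dε T ≤ 1 / ((1 - ε) * D T) :=
          one_div_le_one_div_of_le hDεpos hle
        have hlogle : Real.logb 2 (1 / Dε T) ≤ Real.logb 2 (1 / ((1 - ε) * D T)) := by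
          refine (Real.logb_le_logb one_lt_two ?_ ?_).mpr hinv
          · exact one_div_pos.mpr (lt_of_lt_of_le hDεpos hle)
          · exact one_div_pos.mpr hDεpos
        have hsplit : Real.logb 2 (1 / ((1 - ε) * D T))
            = Real.logb 2 (1 / D T) + Real.logb 2 (1 / (1 - ε)) := by
          rw [show (1:ℝ) / ((1 - ε) * D T) = (1 / D T) * (1 / (1 - ε)) by
            rw [one_div_mul_one_div]; ring_nf]
          exact Real.logb_mul (by positivity) (by positivity)
        calc D T * Real.logb 2 (1 / Dε T) ≤ D T * Real.logb 2 (1 / ((1 - ε) * D T)) :=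
              mul_le_mul_of_nonneg_left hlogle h.le
          _ = D T * Real.logb 2 (1 / D T) + D T * Real.logb 2 (1 / (1 - ε)) := by
              rw [hsplit]; ring
    calc ∑ T ∈ F, D T * Real.logb 2 (1 / Dε T)
        ≤ ∑ T ∈ F, (D T * Real.logb 2 (1 / D T) + D T * Real.logb 2 (1 / (1 - ε))) :=
          Finset.sum_le_sum per
      _ = Ent D + (∑ T ∈ F, D T) * Real.logb 2 (1 / (1 - ε)) := by
          rw [Finset.sum_add_distrib, ← Finset.sum_mul, hEnt]
      _ = Ent D + Real.logb 2 (1 / (1 - ε)) := by rw [hD1, one_mul]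
      _ ≤ H + Real.logb 2 (1 / (1 - ε)) := by linarith
  -- (C)
  have hMε : (0:ℝ) < M + ε := by linarith
  have hC : Real.logb 2 (1 / (M + ε)) ≤ ∑ T ∈ F, D' T * Real.logb 2 (1 / Dε T) := by
    have per : ∀ T ∈ F, D' T * Real.logb 2 (1 / (M + ε)) ≤ D' T * Real.logb 2 (1 / Dε T) := by
      intro T hT
      rcases eq_or_lt_of_le (h'0 T) with h | h
      · rw [← h]; simp
      · have hTFs : T ∈ Fs := Finset.mem_filter.mpr ⟨hT, h.ne'⟩
        have hDM : D T ≤ M := Finset.le_sup' _ hTFs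
        have hDεpos : 0 < Dε T := by
          show 0 < (1 - ε) * D T + ε * D' T
          have h2 : 0 < ε * D' T := mul_pos hε0 h
          have h3 : 0 ≤ (1 - ε) * D T := mul_nonneg h1ε.le (hD0 T)
          linarith
        have hDεle : Dε T ≤ M + ε := by
          show (1 - ε) * D T + ε * D' T ≤ M + ε
          have h3 : (1 - ε) * D T ≤ 1 * D T :=
            mul_le_mul_of_nonneg_right (by linarith) (hD0 T)
          rw [one_mul] at h3
          have h4 : ε * D' T ≤ ε * 1 := mul_le_mul_of_nonneg_left (hD'le1 T) hε0.le
          rw [mul_one] at h4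
          linarith
        have hinv : 1 / (M + ε) ≤ 1 / Dε T := one_div_le_one_div_of_le hDεpos hDεle
        have hlog : Real.logb 2 (1 / (M + ε)) ≤ Real.logb 2 (1 / Dε T) := by
          refine (Real.logb_le_logb one_lt_two ?_ ?_).mpr hinv
          · exact one_div_pos.mpr hMε
          · exact one_div_pos.mpr hDεpos
        exact mul_le_mul_of_nonneg_left hlog h.le
    calc Real.logb 2 (1 / (M + ε)) = (∑ T ∈ F, D' T) * Real.logb 2 (1 / (M + ε)) := by
          rw [hsumF, one_mul]
      _ = ∑ T ∈ F, D' T * Real.logb 2 (1 / (M + ε)) := Finset.sum_mul ..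
      _ ≤ ∑ T ∈ F, D' T * Real.logb 2 (1 / Dε T) := Finset.sum_le_sum per
  -- combine
  have hD'D : ∑ T ∈ F, D' T * Real.logb 2 (1 / Dε T)
      ≤ ∑ T ∈ F, D T * Real.logb 2 (1 / Dε T) := by
    have := hA
    rw [show ∑ T ∈ F, (D' T - D T) * Real.logb 2 (1 / Dε T)
        = ∑ T ∈ F, D' T * Real.logb 2 (1 / Dε T)
          - ∑ T ∈ F, D T * Real.logb 2 (1 / Dε T) by
      rw [← Finset.sum_sub_distrib]
      exact Finset.sum_congr rfl fun T _ => by ring] at this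
    linarith
  have hchain : Real.logb 2 (1 / (M + ε)) ≤ H + Real.logb 2 (1 / (1 - ε)) := by
    linarith
  -- exponentiate
  clear_value θ S Fs M ε Dε
  have hexp : 1 / (M + ε) ≤ (2:ℝ) ^ H * (1 / (1 - ε)) := by
    have h1 : (1:ℝ) / (M + ε) = (2:ℝ) ^ Real.logb 2 (1 / (M + ε)) :=
      (Real.rpow_logb two_pos (by norm_num) (one_div_pos.mpr hMε)).symm
    have h2 : (2:ℝ) ^ Real.logb 2 (1 / (M + ε)) ≤ (2:ℝ) ^ (H + Real.logb 2 (1 / (1 - ε))) :=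
      (Real.rpow_le_rpow_left_iff one_lt_two).mpr hchain
    have h3 : (2:ℝ) ^ (H + Real.logb 2 (1 / (1 - ε))) = (2:ℝ) ^ H * (1 / (1 - ε)) := by
      rw [Real.rpow_add two_pos, Real.rpow_logb two_pos (by norm_num) (one_div_pos.mpr h1ε)]
    rw [h1]
    rw [h3] at h2
    exact h2
  have hfinal : 1 - ε ≤ (2:ℝ) ^ H * (M + ε) := by
    rw [show (2:ℝ) ^ H * (1 / (1 - ε)) = (2:ℝ) ^ H / (1 - ε) by ring,
      div_le_div_iff₀ hMε h1ε, one_mul] at hexp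
    exact hexp
  have hεeq : ε * (2 * (1 + (2:ℝ) ^ H)) = 1 - (2:ℝ) ^ H * M := by
    rw [hε, div_mul_cancel₀ _ hden.ne']
  nlinarith [hfinal, hεeq, htM, ht2pos, hε0]
end

section
/- In the one-step puncturing potential argument: let F be a family of subsets of [n], J ⊆ [n], and Q a distribution on J such that Pr_{i ∼ Q}[i ∈ A] ≥ p for every A in a subfamily F⁻ ⊆ F. Define Φ := Σ_{A ∈ F⁻} 2^{|A ∩ J|}. Then E_{i ∼ Q}[ Σ_{A ∈ F⁻} 2^{|A ∩ (J \ {i})|} ] ≤ (1 - p/2)·Φ. -/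
/-- One step of the puncturing potential argument: if `Q` is a distribution on `J`
with `Pr_{i ∼ Q}[i ∈ A] ≥ p` for every `A` in the subfamily `Fm`, then sampling
`i ∼ Q` and removing it from `J` shrinks the potential `Φ = Σ_A 2^{|A ∩ J|}` in
expectation by a factor `1 - p/2`. -/
theorem potential_decrease {n : ℕ} (J : Finset (Fin n))
    (Fm : Finset (Finset (Fin n))) (Q : Fin n → ℝ) (p : ℝ)
    (hp : 0 ≤ p) (hQ : ∀ i, 0 ≤ Q i) (hQ1 : (∑ i, Q i) = 1)
    (hQJ : ∀ i, i ∉ J → Q i = 0)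
    (hcov : ∀ A ∈ Fm, p ≤ ∑ i ∈ A, Q i) :
    (∑ i, Q i * (∑ A ∈ Fm, (2 : ℝ) ^ ((A ∩ (J \ {i})).card))) ≤
      (1 - p / 2) * ∑ A ∈ Fm, (2 : ℝ) ^ ((A ∩ J).card) := by
  have key : ∀ A ∈ Fm,
      (∑ i, Q i * (2 : ℝ) ^ ((A ∩ (J \ {i})).card)) ≤
        (1 - p / 2) * (2 : ℝ) ^ ((A ∩ J).card) := by
    intro A hA
    have hpow : ∀ i : Fin n, (2 : ℝ) ^ ((A ∩ (J \ {i})).card) =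
        (2 : ℝ) ^ ((A ∩ J).card) * (if i ∈ A ∩ J then (1/2 : ℝ) else 1) := by
      intro i
      by_cases hi : i ∈ A ∩ J
      · have hset : A ∩ (J \ {i}) = (A ∩ J) \ {i} := by
          ext x; simp [Finset.mem_inter, Finset.mem_sdiff]; tauto
        have hcard : ((A ∩ J) \ {i}).card + 1 = (A ∩ J).card := by
          rw [Finset.card_sdiff_of_subset (by simpa using hi)]
          have : 1 ≤ (A ∩ J).card := Finset.card_pos.mpr ⟨i, hi⟩
          simp [Nat.sub_add_cancel this]
        rw [hset, if_pos hi]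
        have := pow_succ (2 : ℝ) (((A ∩ J) \ {i}).card)
        rw [← hcard]
        rw [pow_succ]
        ring
      · have hset : A ∩ (J \ {i}) = A ∩ J := by
          ext x; simp only [Finset.mem_inter, Finset.mem_sdiff, Finset.mem_singleton]
          constructor
          · rintro ⟨hx, hxJ, _⟩; exact ⟨hx, hxJ⟩
          · rintro ⟨hx, hxJ⟩
            refine ⟨hx, hxJ, ?_⟩
            rintro rfl; exact hi (Finset.mem_inter.mpr ⟨hx, hxJ⟩)
        rw [hset, if_neg hi, mul_one]
    calc (∑ i, Q i * (2 : ℝ) ^ ((A ∩ (J \ {i})).card))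
        = (2 : ℝ) ^ ((A ∩ J).card) *
            (∑ i, Q i * (if i ∈ A ∩ J then (1/2 : ℝ) else 1)) := by
          rw [Finset.mul_sum]; apply Finset.sum_congr rfl; intro i _
          rw [hpow i]; ring
      _ = (2 : ℝ) ^ ((A ∩ J).card) *
            (1 - (1/2) * ∑ i ∈ A ∩ J, Q i) := by
          congr 1
          have : ∀ i : Fin n, Q i * (if i ∈ A ∩ J then (1/2 : ℝ) else 1) =
              Q i - (1/2) * (if i ∈ A ∩ J then Q i else 0) := by
            intro i; by_cases h : i ∈ A ∩ J <;> simp [h] <;> ring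
          rw [Finset.sum_congr rfl (fun i _ => this i), Finset.sum_sub_distrib, hQ1,
            ← Finset.mul_sum, Finset.sum_ite_mem, Finset.univ_inter]
      _ ≤ (2 : ℝ) ^ ((A ∩ J).card) * (1 - p / 2) := by
          apply mul_le_mul_of_nonneg_left _ (by positivity)
          have hAJ : (∑ i ∈ A ∩ J, Q i) = ∑ i ∈ A, Q i := by
            apply Finset.sum_subset (Finset.inter_subset_left)
            intro i hiA hiAJ
            exact hQJ i (fun hiJ => hiAJ (Finset.mem_inter.mpr ⟨hiA, hiJ⟩))
          have := hcov A hA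
          rw [hAJ]; linarith
      _ = (1 - p / 2) * (2 : ℝ) ^ ((A ∩ J).card) := by ring
  calc (∑ i, Q i * (∑ A ∈ Fm, (2 : ℝ) ^ ((A ∩ (J \ {i})).card)))
      = ∑ A ∈ Fm, ∑ i, Q i * (2 : ℝ) ^ ((A ∩ (J \ {i})).card) := by
        rw [Finset.sum_comm]
        apply Finset.sum_congr rfl; intro i _; rw [Finset.mul_sum]
    _ ≤ ∑ A ∈ Fm, (1 - p / 2) * (2 : ℝ) ^ ((A ∩ J).card) :=
        Finset.sum_le_sum key
    _ = (1 - p / 2) * ∑ A ∈ Fm, (2 : ℝ) ^ ((A ∩ J).card) := by rw [Finset.mul_sum]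
end

section
/- There exists an absolute constant C such that the following holds: if F is a k-moonflower-free family of sets each of size at most w, with w ≤ k, then |F| ≤ (C·k/w)^w. -/
open Finset

section Aux

variable {α : Type*} [DecidableEq α]

/-- k sets with a private system of representatives give a moonflower. -/
lemma moonflower_of_reps {k : ℕ} {F : Finset (Finset α)}
    (T : Fin k → Finset α) (x : Fin k → α)
    (hTF : ∀ i, T i ∈ F) (hmem : ∀ i, x i ∈ T i)
    (hpriv : ∀ i j, i ≠ j → x i ∉ T j) (hMF : MoonflowerFree k F) : False := by
  apply hMF
  refine ⟨T, ?_, hTF, ?_⟩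
  · intro i j hij
    by_contra hne
    exact hpriv i j hne (hij ▸ hmem i)
  · classical
    refine ⟨Finset.univ.biUnion (fun j => T j \ {x j}), ?_, ?_⟩
    · intro i
      refine ⟨x i, ?_⟩
      simp only [Finset.mem_sdiff, Finset.mem_biUnion, Finset.mem_univ, true_and, not_exists]
      refine ⟨hmem i, ?_⟩
      intro j hj
      rcases eq_or_ne j i with rfl | hne
      · simp at hj
      · exact (hpriv i j (fun h => hne h.symm)) hj.1
    · intro i j hij
      have key : ∀ i, T i \ Finset.univ.biUnion (fun j => T j \ {x j}) = {x i} := by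
        intro i
        ext y
        simp only [Finset.mem_sdiff, Finset.mem_biUnion, Finset.mem_univ, true_and, not_exists,
          Finset.mem_singleton]
        constructor
        · rintro ⟨hyT, hy⟩
          have := hy i
          simp only [Finset.mem_sdiff, Finset.mem_singleton, not_and, not_not] at this
          exact this hyT
        · rintro rfl
          refine ⟨hmem i, ?_⟩
          intro j hj
          rcases eq_or_ne j i with rfl | hne
          · simp at hj
          · exact (hpriv i j (fun h => hne h.symm)) hj.1
      rw [key i, key j]
      rw [Finset.disjoint_singleton]
      intro h
      exact hpriv i j hij (h ▸ hmem j)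

/-- With k = 0, every family trivially contains a moonflower. -/
lemma not_moonflowerFree_zero (F : Finset (Finset α)) : ¬ MoonflowerFree 0 F := by
  intro h
  exact h ⟨fun i => i.elim0, fun i => i.elim0, fun i => i.elim0,
    ⟨∅, fun i => i.elim0, fun i => i.elim0⟩⟩

/-- With k = 1, a moonflower-free family contains only the empty set. -/
lemma eq_empty_of_moonflowerFree_one {F : Finset (Finset α)}
    (h : MoonflowerFree 1 F) : ∀ S ∈ F, S = ∅ := by
  intro S hS
  by_contra hne
  apply h
  refine ⟨fun _ => S, fun i j _ => Subsingleton.elim i j, fun _ => hS, ∅, fun _ => ?_, ?_⟩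
  · rw [Finset.sdiff_empty]
    exact Finset.nonempty_of_ne_empty hne
  · intro i j hij
    exact absurd (Subsingleton.elim i j) hij

end Aux

variable {α : Type*} [DecidableEq α]



/-- For each set `S` in the `s`-uniform layer of a moonflower-free family, there is a
small witness set avoiding `S` that meets every other member of the layer. -/
lemma exists_witness [Fintype α] [LinearOrder α] {k s : ℕ} {F : Finset (Finset α)}
    (hMF : MoonflowerFree k F) {S : Finset α} (hS : S ∈ F) (hcard : S.card = s) :
    ∃ A : Finset α, Disjoint A S ∧ A.card ≤ k - 1 ∧
      ∀ T ∈ F, T.card = s → T ≠ S → (A ∩ T).Nonempty := by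
  classical
  set G : Finset (Finset α) := (F.filter (fun T => T.card = s)).erase S with hG
  -- residuals T \ S for T ∈ G are nonempty
  have hres : ∀ T ∈ G, (T \ S).Nonempty := by
    intro T hT
    rw [hG, Finset.mem_erase, Finset.mem_filter] at hT
    rw [Finset.sdiff_nonempty]
    intro hsub
    exact hT.1 (Finset.eq_of_subset_of_card_le hsub (by rw [hcard, hT.2.2]))
  -- the collection of covers
  set K : Finset (Finset α) :=
    Finset.univ.powerset.filter (fun X => ∀ T ∈ G, ((T \ S) ∩ X).Nonempty) with hK
  have hKne : K.Nonempty := by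
    refine ⟨Finset.univ, ?_⟩
    rw [hK, Finset.mem_filter]
    refine ⟨Finset.mem_powerset_self _, ?_⟩
    intro T hT
    rw [Finset.inter_univ]
    exact hres T hT
  obtain ⟨X, hXK, hXmin⟩ := Finset.exists_min_image K Finset.card hKne
  have hXcov : ∀ T ∈ G, ((T \ S) ∩ X).Nonempty := by
    rw [hK, Finset.mem_filter] at hXK; exact hXK.2
  -- X is disjoint from S
  have hXS : Disjoint X S := by
    rw [Finset.disjoint_left]
    intro x hxX hxS
    have herase : X.erase x ∈ K := by
      rw [hK, Finset.mem_filter]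
      refine ⟨Finset.mem_powerset.2 (Finset.subset_univ _), ?_⟩
      intro T hT
      obtain ⟨y, hy⟩ := hXcov T hT
      rw [Finset.mem_inter, Finset.mem_sdiff] at hy
      refine ⟨y, ?_⟩
      rw [Finset.mem_inter, Finset.mem_sdiff, Finset.mem_erase]
      exact ⟨⟨hy.1.1, hy.1.2⟩, fun h => hy.1.2 (h ▸ hxS), hy.2⟩
    have := hXmin _ herase
    have hlt : (X.erase x).card < X.card := Finset.card_erase_lt_of_mem hxX
    omega
  -- every x ∈ X has a witness T with (T \ S) ∩ X = {x}
  have hwit : ∀ x ∈ X, ∃ T ∈ G, (T \ S) ∩ X = {x} := by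
    intro x hxX
    have herase : X.erase x ∉ K := by
      intro hmem
      have := hXmin _ hmem
      have hlt : (X.erase x).card < X.card := Finset.card_erase_lt_of_mem hxX
      omega
    rw [hK, Finset.mem_filter, not_and_or] at herase
    rcases herase with h | h
    · exact absurd (Finset.mem_powerset.2 (Finset.subset_univ _)) h
    · push_neg at h
      obtain ⟨T, hTG, hTempty⟩ := h
      refine ⟨T, hTG, ?_⟩
      obtain ⟨y, hy⟩ := hXcov T hTG
      apply Finset.Subset.antisymm
      · intro z hz
        rw [Finset.mem_inter] at hz
        rw [Finset.mem_singleton]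
        by_contra hne
        have : z ∈ (T \ S) ∩ X.erase x := by
          rw [Finset.mem_inter, Finset.mem_erase]
          exact ⟨hz.1, hne, hz.2⟩
        rw [hTempty] at this
        exact absurd this (Finset.notMem_empty z)
      · -- {x} ⊆ (T \ S) ∩ X : x must be the unique cover element
        intro z hz
        rw [Finset.mem_singleton] at hz
        subst hz
        rw [Finset.mem_inter]
        refine ⟨?_, hxX⟩
        by_contra hzT
        -- then (T\S) ∩ X ⊆ erase, contradiction with hTempty and hXcov
        rw [Finset.mem_inter] at hy
        have : y ∈ (T \ S) ∩ X.erase z := by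
          rw [Finset.mem_inter, Finset.mem_erase]
          exact ⟨hy.1, fun h => hzT (h ▸ hy.1), hy.2⟩
        rw [hTempty] at this
        exact absurd this (Finset.notMem_empty y)
  -- |X| ≤ k - 1, else we find a k-moonflower
  have hXcard : X.card ≤ k - 1 := by
    by_contra hbig
    push_neg at hbig
    have hk : k ≤ X.card := by omega
    obtain ⟨Y, hYX, hYcard⟩ := Finset.exists_subset_card_eq hk
    set e := Y.orderIsoOfFin hYcard with he
    -- witnesses
    have hwit' : ∀ i : Fin k, ∃ T ∈ G, (T \ S) ∩ X = {(e i : α)} :=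
      fun i => hwit _ (hYX (e i).2)
    choose T hTG hTX using hwit'
    refine moonflower_of_reps T (fun i => (e i : α)) (fun i => ?_) (fun i => ?_)
      (fun i j hij => ?_) hMF
    · have := hTG i
      rw [hG, Finset.mem_erase, Finset.mem_filter] at this
      exact this.2.1
    · have : (e i : α) ∈ (T i \ S) ∩ X := by
        rw [hTX i]; exact Finset.mem_singleton_self _
      rw [Finset.mem_inter, Finset.mem_sdiff] at this
      exact this.1.1
    · intro hmem
      -- e i ∈ T j ; also e i ∉ S and e i ∈ X, so e i ∈ (T j \ S) ∩ X = {e j}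
      have hiS : (e i : α) ∉ S := by
        have : (e i : α) ∈ (T i \ S) ∩ X := by
          rw [hTX i]; exact Finset.mem_singleton_self _
        rw [Finset.mem_inter, Finset.mem_sdiff] at this
        exact this.1.2
      have hiX : (e i : α) ∈ X := hYX (e i).2
      have : (e i : α) ∈ (T j \ S) ∩ X := by
        rw [Finset.mem_inter, Finset.mem_sdiff]
        exact ⟨⟨hmem, hiS⟩, hiX⟩
      rw [hTX j, Finset.mem_singleton] at this
      have : (e i : Y) = e j := Subtype.ext this
      exact hij (e.injective this)
  refine ⟨X, hXS, hXcard, ?_⟩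
  intro T hTF hTcard hTne
  have hTG : T ∈ G := by
    rw [hG, Finset.mem_erase, Finset.mem_filter]
    exact ⟨hTne, hTF, hTcard⟩
  obtain ⟨y, hy⟩ := hXcov T hTG
  rw [Finset.mem_inter, Finset.mem_sdiff] at hy
  exact ⟨y, Finset.mem_inter.2 ⟨hy.2, hy.1.1⟩⟩


/-- binomial monotonicity along the diagonal. -/
lemma choose_pred_le {n j : ℕ} (h : j ≤ n) : (n - 1).choose (j - 1) ≤ n.choose j := by
  rcases Nat.eq_zero_or_pos j with rfl | hj
  · simp
  · obtain ⟨i, rfl⟩ : ∃ i, j = i + 1 := ⟨j - 1, by omega⟩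
    obtain ⟨n', rfl⟩ : ∃ n', n = n' + 1 := ⟨n - 1, by omega⟩
    have hid := Nat.add_one_mul_choose_eq n' i
    have h1 : (n' + 1 - 1).choose (i + 1 - 1) = n'.choose i := by norm_num
    rw [h1]
    have : (i+1) * n'.choose i ≤ (n'+1) * n'.choose i :=
      Nat.mul_le_mul_right _ (by omega)
    rw [hid] at this
    calc n'.choose i = ((i+1) * n'.choose i) / (i+1) := by
              rw [Nat.mul_div_cancel_left _ (by omega)]
      _ ≤ ((n'+1).choose (i+1) * (i+1)) / (i+1) := Nat.div_le_div_right this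
      _ = (n'+1).choose (i+1) := by rw [Nat.mul_div_cancel _ (by omega)]

lemma choose_sub_sub_le (n j d : ℕ) (h : j ≤ n) :
    (n - d).choose (j - d) ≤ n.choose j := by
  induction d with
  | zero => simp
  | succ d ih =>
      have h1 : n - (d+1) = (n - d) - 1 := by omega
      have h2 : j - (d+1) = (j - d) - 1 := by omega
      rw [h1, h2]
      exact le_trans (choose_pred_le (by omega)) ih

lemma card_slice [Fintype α] (A B : Finset α) (t : ℕ) (hAB : Disjoint A B) (hAt : A.card ≤ t) :
    (((univ : Finset α).powersetCard t).filter (fun C => A ⊆ C ∧ Disjoint C B)).card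
      = (Fintype.card α - A.card - B.card).choose (t - A.card) := by
  classical
  have himg : ((univ : Finset α).powersetCard t).filter (fun C => A ⊆ C ∧ Disjoint C B)
      = (((univ : Finset α) \ (A ∪ B)).powersetCard (t - A.card)).image (fun D => A ∪ D) := by
    ext C
    simp only [mem_filter, mem_powersetCard, mem_image]
    constructor
    · rintro ⟨⟨-, hCcard⟩, hAC, hCB⟩
      refine ⟨C \ A, ⟨?_, ?_⟩, ?_⟩
      · intro y hy
        rw [mem_sdiff] at hy ⊢
        refine ⟨mem_univ y, ?_⟩
        rw [mem_union]
        rintro (h | h)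
        · exact hy.2 h
        · exact (disjoint_left.1 hCB) hy.1 h
      · rw [card_sdiff_of_subset hAC, hCcard]
      · rw [Finset.union_sdiff_of_subset hAC]
    · rintro ⟨D, ⟨hDsub, hDcard⟩, rfl⟩
      have hDA : Disjoint A D := by
        rw [disjoint_right]
        intro y hyD hyA
        have := hDsub hyD
        rw [mem_sdiff, mem_union] at this
        exact this.2 (Or.inl hyA)
      have hDB : Disjoint D B := by
        rw [disjoint_left]
        intro y hyD hyB
        have := hDsub hyD
        rw [mem_sdiff, mem_union] at this
        exact this.2 (Or.inr hyB)
      refine ⟨⟨subset_univ _, ?_⟩, subset_union_left, ?_⟩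
      · rw [card_union_of_disjoint hDA, hDcard]
        omega
      · rw [disjoint_union_left]
        exact ⟨hAB, hDB⟩
  rw [himg, card_image_of_injOn, card_powersetCard]
  · congr 1
    rw [card_sdiff_of_subset (subset_univ _), card_union_of_disjoint hAB, card_univ]
    omega
  · intro D₁ h₁ D₂ h₂ heq
    rw [mem_coe, mem_powersetCard] at h₁ h₂
    simp only [] at heq
    have key : ∀ D, D ⊆ (univ : Finset α) \ (A ∪ B) → (A ∪ D) \ A = D := by
      intro D hD
      rw [Finset.union_sdiff_cancel_left]
      rw [disjoint_left]
      intro y hyA hyD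
      have := hD hyD
      rw [mem_sdiff, mem_union] at this
      exact this.2 (Or.inl hyA)
    rw [← key D₁ h₁.1, ← key D₂ h₂.1, heq]

/-- The Bollobás-type counting bound. -/
lemma bollobas_count [Fintype α] (G : Finset (Finset α)) (A : Finset α → Finset α)
    (a b t : ℕ)
    (hub : ∀ S ∈ G, S.card = b)
    (hAa : ∀ S ∈ G, (A S).card ≤ a)
    (hd : ∀ S ∈ G, Disjoint (A S) S)
    (hcross : ∀ S ∈ G, ∀ T ∈ G, T ≠ S → ((A S) ∩ T).Nonempty)
    (hat : a ≤ t) (htb : t + b ≤ Fintype.card α) :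
    G.card * ((Fintype.card α - (a + b)).choose (t - a)) ≤ (Fintype.card α).choose t := by
  classical
  set N := Fintype.card α with hN
  set C : Finset α → Finset (Finset α) :=
    fun S => ((univ : Finset α).powersetCard t).filter (fun C => A S ⊆ C ∧ Disjoint C S) with hC
  have hdisj : ∀ S ∈ G, ∀ T ∈ G, S ≠ T → Disjoint (C S) (C T) := by
    intro S hS T hT hST
    rw [Finset.disjoint_left]
    intro X hXS hXT
    rw [hC, mem_filter] at hXS hXT
    obtain ⟨x, hx⟩ := hcross S hS T hT (Ne.symm hST)
    rw [mem_inter] at hx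
    exact (disjoint_left.1 hXT.2.2) (hXS.2.1 hx.1) hx.2
  have hsum : ∑ S ∈ G, (C S).card ≤ N.choose t := by
    rw [← Finset.card_biUnion hdisj]
    calc (G.biUnion C).card ≤ ((univ : Finset α).powersetCard t).card := by
            apply Finset.card_le_card
            intro X hX
            rw [Finset.mem_biUnion] at hX
            obtain ⟨S, _, hXS⟩ := hX
            rw [hC, mem_filter] at hXS
            exact hXS.1
      _ = N.choose t := by rw [card_powersetCard, card_univ]
  have hlower : ∀ S ∈ G, (N - (a + b)).choose (t - a) ≤ (C S).card := by
    intro S hS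
    rw [hC]
    have hcardS := card_slice (A S) S t (hd S hS) (le_trans (hAa S hS) hat)
    rw [hcardS, hub S hS]
    have haS := hAa S hS
    have e1 : N - (a + b) = (N - (A S).card - b) - (a - (A S).card) := by omega
    have e2 : t - a = (t - (A S).card) - (a - (A S).card) := by omega
    rw [e1, e2]
    exact choose_sub_sub_le _ _ _ (by omega)
  calc G.card * ((N - (a + b)).choose (t - a))
      = ∑ _S ∈ G, (N - (a + b)).choose (t - a) := by
        rw [Finset.sum_const, smul_eq_mul]
    _ ≤ ∑ S ∈ G, (C S).card := Finset.sum_le_sum hlower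
    _ ≤ N.choose t := hsum

/-- `((n+1)/n)^m ≤ 3` for `m ≤ n`. -/
lemma succ_div_pow_le_three (n m : ℕ) (hn : 1 ≤ n) (hm : m ≤ n) :
    (((n : ℝ) + 1) / n) ^ m ≤ 3 := by
  have hn' : (0:ℝ) < n := by exact_mod_cast hn
  have h1 : ((n:ℝ) + 1)/n = 1 + 1/n := by field_simp
  have h2 : (1:ℝ) + 1/n ≤ Real.exp (1/n) := by
    have := Real.add_one_le_exp (1/(n:ℝ))
    linarith
  have h3 : (((n : ℝ) + 1) / n) ^ m ≤ Real.exp (1/n) ^ m := by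
    apply pow_le_pow_left₀ _ (h1 ▸ h2)
    positivity
  have h4 : Real.exp (1/(n:ℝ)) ^ m = Real.exp (m * (1/n)) := (Real.exp_nat_mul _ m).symm
  have h5 : Real.exp ((m:ℝ) * (1/n)) ≤ Real.exp 1 := by
    apply Real.exp_le_exp.2
    rw [mul_one_div, div_le_one hn']
    exact_mod_cast hm
  have h6 : Real.exp 1 < 3 := lt_trans Real.exp_one_lt_d9 (by norm_num)
  calc (((n : ℝ) + 1) / n) ^ m ≤ Real.exp ((m:ℝ) * (1/n)) := h4 ▸ h3
    _ ≤ Real.exp 1 := h5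
    _ ≤ 3 := le_of_lt h6

lemma succ_pow_le_three_mul (n m : ℕ) (hn : 1 ≤ n) (hm : m ≤ n) :
    ((n : ℝ) + 1) ^ m ≤ 3 * (n:ℝ) ^ m := by
  have hn' : (0:ℝ) < n := by exact_mod_cast hn
  have := succ_div_pow_le_three n m hn hm
  rw [div_pow] at this
  rw [div_le_iff₀ (by positivity)] at this
  linarith

/-- The entropy-type lemma: `(a+b)^(a+b) ≤ 4^(b+1) · C(a+b,a) · a^a · b^b`. -/
lemma g_lemma (a : ℕ) (ha : 1 ≤ a) : ∀ b : ℕ,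
    (((a+b : ℕ)) : ℝ) ^ (a+b) ≤ 4 ^ (b+1) * ((a+b).choose a) * (a:ℝ)^a * (b:ℝ)^b := by
  intro b
  induction b with
  | zero =>
      simp only [Nat.add_zero, Nat.choose_self, Nat.cast_one, pow_zero, mul_one, zero_add,
        pow_one]
      nlinarith [pow_nonneg (by positivity : (0:ℝ) ≤ (a:ℝ)) a]
  | succ b ih =>
      have hab : 1 ≤ a + b := by omega
      -- C(a+b+1, a) * (b+1) = C(a+b, a) * (a+b+1)
      have hid : ((a+b+1).choose a) * (b+1) = ((a+b).choose a) * (a+b+1) := by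
        have h2 : (a+b).choose b = (a+b).choose a := by
          rw [← Nat.choose_symm (by omega : b ≤ a + b)]
          congr 1
          omega
        have h3 : (a+b+1).choose (b+1) = (a+b+1).choose a := by
          rw [← Nat.choose_symm (by omega : b+1 ≤ a+b+1)]
          congr 1
          omega
        have h1 : (a+b+1) * ((a+b).choose a) = ((a+b+1).choose a) * (b+1) := by
          simpa [Nat.succ_eq_add_one, h2, h3] using Nat.add_one_mul_choose_eq (a+b) b
        rw [← h1]
        ring
      set x : ℝ := (a:ℝ) with hx
      set y : ℝ := (b:ℝ) with hy
      set Cb : ℝ := (((a+b).choose a : ℕ) : ℝ) with hCb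
      set Cb' : ℝ := (((a+b+1).choose a : ℕ) : ℝ) with hCb'
      have hidR : Cb' * (y+1) = Cb * (x+y+1) := by
        rw [hCb', hCb, hx, hy]
        exact_mod_cast congrArg (Nat.cast (R := ℝ)) hid
      have ihR : (x+y)^(a+b) ≤ 4^(b+1) * Cb * x^a * y^b := by
        have : ((a+b:ℕ):ℝ) = x + y := by push_cast; ring
        rw [← this]
        exact ih
      have key1 : (x+y+1)^(a+b) ≤ 3*(x+y)^(a+b) := by
        have h := succ_pow_le_three_mul (a+b) (a+b) hab le_rfl
        have hc : ((a+b:ℕ):ℝ) = x + y := by push_cast; ring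
        rw [hc] at h
        exact h
      have key3 : (3:ℝ) * y^b ≤ 4 * (y+1)^b := by
        have : y^b ≤ (y+1)^b := by
          apply pow_le_pow_left₀ (by positivity)
          linarith
        nlinarith [pow_nonneg (by positivity : (0:ℝ) ≤ y) b]
      have hMpos : (0:ℝ) ≤ x + y + 1 := by positivity
      have hQ : (0:ℝ) ≤ 4^(b+1) * Cb * (x+y+1) * x^a := by
        have : (0:ℝ) ≤ Cb := by rw [hCb]; positivity
        positivity
      have goalcast : (((a+(b+1) : ℕ)) : ℝ) ^ (a+(b+1)) = (x+y+1)^(a+b+1) := by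
        rw [show a + (b+1) = a+b+1 by omega]
        push_cast
        ring
      rw [goalcast]
      have hCast2 : ((b+1 : ℕ):ℝ) = y + 1 := by rw [hy]; push_cast; ring
      have hCast3 : (((a+(b+1)).choose a : ℕ) : ℝ) = Cb' := by
        rw [show a+(b+1) = a+b+1 from by omega, hCb']
      rw [hCast2, hCast3]
      calc (x+y+1)^(a+b+1) = (x+y+1) * (x+y+1)^(a+b) := by ring
        _ ≤ (x+y+1) * (3*(x+y)^(a+b)) := mul_le_mul_of_nonneg_left key1 hMpos
        _ ≤ (x+y+1) * (3*(4^(b+1) * Cb * x^a * y^b)) := by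
            apply mul_le_mul_of_nonneg_left _ hMpos
            apply mul_le_mul_of_nonneg_left ihR (by norm_num)
        _ = (3 * y^b) * (4^(b+1) * Cb * (x+y+1) * x^a) := by ring
        _ ≤ (4 * (y+1)^b) * (4^(b+1) * Cb * (x+y+1) * x^a) := mul_le_mul_of_nonneg_right key3 hQ
        _ = 4^((b+1)+1) * Cb' * x^a * (y+1)^(b+1) := by
            have expand : (4:ℝ)^((b+1)+1) = 4 * 4^(b+1) := by ring
            rw [expand]
            linear_combination (-(4 * (y+1)^b * 4^(b+1) * x^a)) * hidR

lemma pow_sub_le_descFactorial : ∀ (j n : ℕ), (n + 1 - j)^j ≤ n.descFactorial j := by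
  intro j
  induction j with
  | zero => intro n; simp
  | succ j ih =>
      intro n
      rw [Nat.descFactorial_succ]
      calc (n + 1 - (j+1))^(j+1) = (n - j) * (n - j)^j := by
            rw [show n + 1 - (j+1) = n - j from by omega, pow_succ]
            ring
        _ ≤ (n - j) * (n + 1 - j)^j :=
            Nat.mul_le_mul_left _ (Nat.pow_le_pow_left (by omega) j)
        _ ≤ (n - j) * n.descFactorial j := Nat.mul_le_mul_left _ (ih n)

lemma choose_desc_identity (N t a b : ℕ) (hat : a ≤ t) (htN : t ≤ N) (hb : b ≤ N - t) :
    N.choose t * t.descFactorial a * (N-t).descFactorial b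
      = (N-(a+b)).choose (t-a) * N.descFactorial (a+b) := by
  have hab : a + b ≤ N := by omega
  have hta : t - a ≤ N - (a+b) := by omega
  apply Nat.eq_of_mul_eq_mul_right
    (show 0 < (t-a).factorial * ((N-t)-b).factorial from
      Nat.mul_pos (Nat.factorial_pos _) (Nat.factorial_pos _))
  have e1 : t.descFactorial a * (t-a).factorial = t.factorial := by
    rw [mul_comm]; exact Nat.factorial_mul_descFactorial hat
  have e2 : (N-t).descFactorial b * ((N-t)-b).factorial = (N-t).factorial := by
    rw [mul_comm]; exact Nat.factorial_mul_descFactorial hb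
  have e3 : N.choose t * t.factorial * (N-t).factorial = N.factorial :=
    Nat.choose_mul_factorial_mul_factorial htN
  have e4 : (N-(a+b)).choose (t-a) * (t-a).factorial * ((N-(a+b))-(t-a)).factorial
      = (N-(a+b)).factorial := Nat.choose_mul_factorial_mul_factorial hta
  have e5 : (N-(a+b))-(t-a) = (N-t)-b := by omega
  have e6 : (N-(a+b)).factorial * N.descFactorial (a+b) = N.factorial :=
    Nat.factorial_mul_descFactorial hab
  calc N.choose t * t.descFactorial a * (N-t).descFactorial b * ((t-a).factorial * ((N-t)-b).factorial)
      = N.choose t * (t.descFactorial a * (t-a).factorial) * ((N-t).descFactorial b * ((N-t)-b).factorial) := by ring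
    _ = N.choose t * t.factorial * (N-t).factorial := by rw [e1, e2]
    _ = N.factorial := e3
    _ = (N-(a+b)).factorial * N.descFactorial (a+b) := e6.symm
    _ = ((N-(a+b)).choose (t-a) * (t-a).factorial * ((N-(a+b))-(t-a)).factorial) * N.descFactorial (a+b) := by rw [e4]
    _ = ((N-(a+b)).choose (t-a) * (t-a).factorial * ((N-t)-b).factorial) * N.descFactorial (a+b) := by rw [e5]
    _ = (N-(a+b)).choose (t-a) * N.descFactorial (a+b) * ((t-a).factorial * ((N-t)-b).factorial) := by ring

/-- The key binomial ratio estimate. -/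
lemma ratio_bound (a b p : ℕ) (ha : 1 ≤ a) (hb : 1 ≤ b) (hp : 2*(a+b) ≤ p+1) :
    ((((a+b)*(p+1)).choose (a*(p+1))) : ℝ) ≤
      12 * 4^b * (((a+b).choose a) : ℝ) *
        ((((a+b)*(p+1) - (a+b)).choose (a*(p+1) - a)) : ℝ) := by
  have hm : 1 ≤ a + b := by omega
  have hp1 : 1 ≤ p := by omega
  have hmp : a + b ≤ p := by omega
  set m := a + b with hmdef
  set N := m*(p+1) with hNdef
  set t := a*(p+1) with htdef
  have hA : t = a*p + a := by rw [htdef, Nat.mul_succ]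
  have hNt' : N = (a*p + a) + (b*p + b) := by
    rw [hNdef, hmdef, Nat.add_mul, Nat.mul_succ, Nat.mul_succ]
  have hat : a ≤ t := by omega
  have htN : t ≤ N := by omega
  have hbNt : b ≤ N - t := by omega
  -- ℕ facts
  have d1 : (a*p)^a ≤ t.descFactorial a := by
    calc (a*p)^a ≤ (t + 1 - a)^a := Nat.pow_le_pow_left (by omega) a
      _ ≤ t.descFactorial a := pow_sub_le_descFactorial a t
  have d2 : (b*p)^b ≤ (N-t).descFactorial b := by
    calc (b*p)^b ≤ ((N-t) + 1 - b)^b := Nat.pow_le_pow_left (by omega) b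
      _ ≤ (N-t).descFactorial b := pow_sub_le_descFactorial b (N-t)
  have d3 : N.descFactorial m ≤ N^m := Nat.descFactorial_le_pow _ _
  have hid := choose_desc_identity N t a b hat htN hbNt
  rw [← hmdef] at hid
  have hchain : N.choose t * ((a*p)^a * (b*p)^b) ≤ (N-m).choose (t-a) * N^m := by
    calc N.choose t * ((a*p)^a * (b*p)^b)
        ≤ N.choose t * (t.descFactorial a * (N-t).descFactorial b) :=
          Nat.mul_le_mul_left _ (Nat.mul_le_mul d1 d2)
      _ = (N-m).choose (t-a) * N.descFactorial m := by rw [← hid]; ring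
      _ ≤ (N-m).choose (t-a) * N^m := Nat.mul_le_mul_left _ d3
  -- move to ℝ
  have hchainR : (N.choose t : ℝ) * ((a:ℝ)^a * (b:ℝ)^b * (p:ℝ)^m) ≤
      ((N-m).choose (t-a) : ℝ) * ((N:ℕ):ℝ)^m := by
    have := (Nat.cast_le (α := ℝ)).2 hchain
    push_cast at this
    calc (N.choose t : ℝ) * ((a:ℝ)^a * (b:ℝ)^b * (p:ℝ)^m)
        = (N.choose t : ℝ) * (((a:ℝ)*(p:ℝ))^a * ((b:ℝ)*(p:ℝ))^b) := by
          rw [mul_pow, mul_pow, hmdef, pow_add]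
          ring
      _ ≤ ((N-m).choose (t-a) : ℝ) * ((N:ℕ):ℝ)^m := by
          convert this using 2 <;> push_cast <;> ring
  have hNcast : ((N:ℕ):ℝ)^m = ((m:ℕ):ℝ)^m * ((p:ℝ)+1)^m := by
    rw [hNdef]
    push_cast
    rw [mul_pow]
  have hg : ((m:ℕ):ℝ)^m ≤ 4^(b+1) * ((m.choose a : ℕ):ℝ) * (a:ℝ)^a * (b:ℝ)^b := by
    have := g_lemma a ha b
    rw [← hmdef] at this
    exact this
  have hq3 : ((p:ℝ)+1)^m ≤ 3 * (p:ℝ)^m := succ_pow_le_three_mul p m hp1 hmp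
  -- final combination
  have hQpos : (0:ℝ) < (a:ℝ)^a * (b:ℝ)^b * (p:ℝ)^m := by
    have ha' : (0:ℝ) < (a:ℝ) := by exact_mod_cast ha
    have hb' : (0:ℝ) < (b:ℝ) := by exact_mod_cast hb
    have hp' : (0:ℝ) < (p:ℝ) := by exact_mod_cast hp1
    positivity
  have hCpos : (0:ℝ) ≤ ((N-m).choose (t-a) : ℝ) := by positivity
  apply le_of_mul_le_mul_right _ hQpos
  calc (N.choose t : ℝ) * ((a:ℝ)^a * (b:ℝ)^b * (p:ℝ)^m)
      ≤ ((N-m).choose (t-a) : ℝ) * ((N:ℕ):ℝ)^m := hchainR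
    _ = ((N-m).choose (t-a) : ℝ) * ((m:ℕ):ℝ)^m * ((p:ℝ)+1)^m := by rw [hNcast]; ring
    _ ≤ ((N-m).choose (t-a) : ℝ) * ((m:ℕ):ℝ)^m * (3 * (p:ℝ)^m) := by
        apply mul_le_mul_of_nonneg_left hq3
        have : (0:ℝ) ≤ ((m:ℕ):ℝ)^m := by positivity
        exact mul_nonneg hCpos this
    _ ≤ ((N-m).choose (t-a) : ℝ) * (4^(b+1) * ((m.choose a : ℕ):ℝ) * (a:ℝ)^a * (b:ℝ)^b) * (3 * (p:ℝ)^m) := by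
        apply mul_le_mul_of_nonneg_right _ (by positivity)
        exact mul_le_mul_of_nonneg_left hg hCpos
    _ = (12 * 4^b * ((m.choose a : ℕ):ℝ) * ((N-m).choose (t-a) : ℝ)) * ((a:ℝ)^a * (b:ℝ)^b * (p:ℝ)^m) := by
        ring

lemma fact_lower : ∀ w : ℕ, (w:ℝ)^w ≤ 3^w * (w.factorial : ℝ) := by
  intro w
  induction w with
  | zero => simp
  | succ w ih =>
      rcases Nat.eq_zero_or_pos w with rfl | hw
      · norm_num
      · have hs : ((w:ℝ)+1)^w ≤ 3 * (w:ℝ)^w := succ_pow_le_three_mul w w hw le_rfl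
        have hcast : (((w+1):ℕ):ℝ) = (w:ℝ)+1 := by push_cast; ring
        rw [hcast]
        calc ((w:ℝ)+1)^(w+1) = ((w:ℝ)+1) * ((w:ℝ)+1)^w := by ring
          _ ≤ ((w:ℝ)+1) * (3 * (w:ℝ)^w) := by
              apply mul_le_mul_of_nonneg_left hs (by positivity)
          _ ≤ ((w:ℝ)+1) * (3 * (3^w * (w.factorial : ℝ))) := by
              apply mul_le_mul_of_nonneg_left _ (by positivity)
              apply mul_le_mul_of_nonneg_left ih (by norm_num)
          _ = 3^(w+1) * (((w:ℝ)+1) * (w.factorial : ℝ)) := by ring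
          _ = 3^(w+1) * ((w+1).factorial : ℝ) := by
              rw [Nat.factorial_succ]
              push_cast
              ring

lemma choose_add_le (k w : ℕ) (hw : 1 ≤ w) (hwk : w ≤ k) :
    (((k+w).choose w : ℕ) : ℝ) ≤ (6*(k:ℝ)/w)^w := by
  have hw' : (0:ℝ) < (w:ℝ) := by exact_mod_cast hw
  have h1 : (k+w).choose w * w.factorial ≤ (2*k)^w := by
    calc (k+w).choose w * w.factorial = (k+w).descFactorial w := by
          rw [Nat.descFactorial_eq_factorial_mul_choose]
          ring
      _ ≤ (k+w)^w := Nat.descFactorial_le_pow _ _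
      _ ≤ (2*k)^w := Nat.pow_le_pow_left (by omega) w
  have h1R : (((k+w).choose w : ℕ) : ℝ) * (w.factorial : ℝ) ≤ (2*(k:ℝ))^w := by
    have := (Nat.cast_le (α := ℝ)).2 h1
    push_cast at this
    exact this
  have hfl := fact_lower w
  have hQpos : (0:ℝ) < (w:ℝ)^w := by positivity
  have hcpos : (0:ℝ) ≤ (((k+w).choose w : ℕ) : ℝ) := by positivity
  apply le_of_mul_le_mul_right _ hQpos
  calc (((k+w).choose w : ℕ) : ℝ) * (w:ℝ)^w
      ≤ (((k+w).choose w : ℕ) : ℝ) * (3^w * (w.factorial : ℝ)) :=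
        mul_le_mul_of_nonneg_left hfl hcpos
    _ = 3^w * ((((k+w).choose w : ℕ) : ℝ) * (w.factorial : ℝ)) := by ring
    _ ≤ 3^w * (2*(k:ℝ))^w := by
        apply mul_le_mul_of_nonneg_left h1R (by positivity)
    _ = (6*(k:ℝ))^w := by rw [← mul_pow]; ring_nf
    _ = (6*(k:ℝ)/w)^w * (w:ℝ)^w := by
        rw [← mul_pow]
        congr 1
        field_simp
  
lemma hockey (k : ℕ) (hk : 1 ≤ k) : ∀ w : ℕ,
    ∑ s ∈ Finset.range (w+1), (k-1+s).choose s = (k+w).choose w := by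
  intro w
  induction w with
  | zero => simp
  | succ w ih =>
      rw [Finset.sum_range_succ, ih]
      have h1 : k-1+(w+1) = k+w := by omega
      have h2 : k + (w+1) = (k+w)+1 := by omega
      rw [h1, h2, Nat.choose_succ_succ]

/-- Bound on the `s`-uniform layer of a moonflower-free family. -/
lemma layer_bound {n k s : ℕ} (hk : 2 ≤ k) (hs : 1 ≤ s) {F : Finset (Finset (Fin n))}
    (hMF : MoonflowerFree k F) :
    ((F.filter (fun S => S.card = s)).card : ℝ) ≤
      12 * 4^s * (((k-1+s).choose s : ℕ) : ℝ) := by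
  classical
  set a := k - 1 with hadef
  have ha1 : 1 ≤ a := by omega
  set m := a + s with hmdef
  have hm1 : 1 ≤ m := by omega
  set q := max (2*m) (n+1) with hqdef
  have hq1 : 1 ≤ q := by
    rw [hqdef]; omega
  obtain ⟨p, hpq⟩ : ∃ p, q = p + 1 := ⟨q - 1, by omega⟩
  have hq2m : 2*m ≤ q := le_max_left _ _
  have hqn : n + 1 ≤ q := le_max_right _ _
  set N := m * q with hNdef
  set t := a * q with htdef
  have hnN : n ≤ N := by
    calc n ≤ q := by omega
      _ = 1 * q := (one_mul q).symm
      _ ≤ m * q := Nat.mul_le_mul_right q hm1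
  -- embed into Fin N
  set emb : Fin n ↪ Fin N := Fin.castLEEmb hnN with hembdef
  set G : Finset (Finset (Fin N)) :=
    (F.filter (fun S => S.card = s)).image (fun S => S.map emb) with hGdef
  have hGcard : G.card = (F.filter (fun S => S.card = s)).card := by
    rw [hGdef]
    apply Finset.card_image_of_injective
    exact fun S T h => Finset.map_injective emb h
  -- witnesses transported to Fin N
  have hwitG : ∀ S' : Finset (Fin N), ∃ A' : Finset (Fin N), S' ∈ G →
      (A'.card ≤ a ∧ Disjoint A' S' ∧ ∀ T' ∈ G, T' ≠ S' → (A' ∩ T').Nonempty) := by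
    intro S'
    by_cases hS' : S' ∈ G
    · rw [hGdef, Finset.mem_image] at hS'
      obtain ⟨S, hSmem, rfl⟩ := hS'
      rw [Finset.mem_filter] at hSmem
      obtain ⟨A, hAdisj, hAcard, hAcross⟩ := exists_witness hMF hSmem.1 hSmem.2
      refine ⟨A.map emb, fun _ => ⟨?_, ?_, ?_⟩⟩
      · rw [Finset.card_map]; exact hAcard
      · rwa [Finset.disjoint_map]
      · intro T' hT' hne
        rw [hGdef, Finset.mem_image] at hT'
        obtain ⟨T, hTmem, rfl⟩ := hT'
        rw [Finset.mem_filter] at hTmem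
        have hTS : T ≠ S := by
          intro h
          exact hne (by rw [h])
        have := hAcross T hTmem.1 hTmem.2 hTS
        rw [← Finset.map_inter]
        exact this.map
    · exact ⟨∅, fun h => absurd h hS'⟩
  choose Afun hAfun using hwitG
  -- apply the counting lemma
  have hcount := bollobas_count G Afun a s t
    (fun S hS => by
      rw [hGdef, Finset.mem_image] at hS
      obtain ⟨S₀, hS₀, rfl⟩ := hS
      rw [Finset.mem_filter] at hS₀
      rw [Finset.card_map]
      exact hS₀.2)
    (fun S hS => ((hAfun S) hS).1)
    (fun S hS => ((hAfun S) hS).2.1)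
    (fun S hS T hT hne => ((hAfun S) hS).2.2 T hT hne)
    (by
      calc a = a * 1 := (Nat.mul_one a).symm
        _ ≤ a * q := Nat.mul_le_mul_left a hq1)
    (by
      rw [Fintype.card_fin]
      calc t + s ≤ a*q + s*q := by
            have : s ≤ s * q := by
              calc s = s * 1 := (Nat.mul_one s).symm
                _ ≤ s * q := Nat.mul_le_mul_left s hq1
            omega
        _ = m * q := by rw [hmdef, Nat.add_mul]
        _ = N := hNdef.symm)
  rw [Fintype.card_fin] at hcount
  -- the ratio bound
  have hratio := ratio_bound a s p ha1 hs (by omega)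
  rw [← hpq] at hratio
  rw [← hmdef, ← hNdef, ← htdef] at hratio
  -- positivity of the common binomial factor
  have hta_le : t - a ≤ N - m := by
    have h1 : t = a*(p+1) := by rw [htdef, hpq]
    have h2 : N = m*(p+1) := by rw [hNdef, hpq]
    have h3 : t - a = a * p := by
      rw [h1, Nat.mul_succ]
      omega
    have h4 : N - m = m * p := by
      rw [h2, Nat.mul_succ]
      omega
    rw [h3, h4]
    exact Nat.mul_le_mul_right p (by omega)
  have hXpos : (0:ℝ) < (((N - m).choose (t - a) : ℕ) : ℝ) := by
    exact_mod_cast Nat.choose_pos hta_le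
  -- combine
  have hcountR : ((F.filter (fun S => S.card = s)).card : ℝ) * (((N - m).choose (t - a) : ℕ) : ℝ)
      ≤ ((N.choose t : ℕ) : ℝ) := by
    rw [← hGcard]
    have := (Nat.cast_le (α := ℝ)).2 hcount
    push_cast at this ⊢
    convert this using 3
  apply le_of_mul_le_mul_right _ hXpos
  calc ((F.filter (fun S => S.card = s)).card : ℝ) * (((N - m).choose (t - a) : ℕ) : ℝ)
      ≤ ((N.choose t : ℕ) : ℝ) := hcountR
    _ ≤ 12 * 4^s * ((m.choose a : ℕ) : ℝ) * (((N - m).choose (t - a) : ℕ) : ℝ) := hratio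
    _ = 12 * 4^s * (((k-1+s).choose s : ℕ) : ℝ) * (((N - m).choose (t - a) : ℕ) : ℝ) := by
        have : m.choose a = (k-1+s).choose s := by
          rw [hmdef, hadef]
          rw [← Nat.choose_symm (by omega : k-1 ≤ k-1+s)]
          congr 1
          omega
        rw [this]

/-- Extremal bound for moonflowers, case `w ≤ k`: there is an absolute constant `C`
such that any `k`-moonflower-free family of sets of size at most `w` with `w ≤ k`
has size at most `(C·k/w)^w`. -/
theorem moonflower_bound_w_le_k :
    ∃ C : ℝ, 0 < C ∧ ∀ (n k w : ℕ) (F : Finset (Finset (Fin n))),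
      (∀ S ∈ F, S.card ≤ w) → MoonflowerFree k F → w ≤ k →
      (F.card : ℝ) ≤ (C * k / w) ^ w := by
  classical
  refine ⟨312, by norm_num, ?_⟩
  intro n k w F hcard hMF hwk
  rcases Nat.eq_zero_or_pos k with rfl | hk0
  · exact absurd hMF (not_moonflowerFree_zero F)
  rcases Nat.eq_zero_or_pos w with rfl | hw0
  · have hF : F ⊆ {∅} := by
      intro S hS
      rw [Finset.mem_singleton]
      exact Finset.card_eq_zero.1 (Nat.le_zero.1 (hcard S hS))
    have hle := Finset.card_le_card hF
    simp only [Finset.card_singleton] at hle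
    rw [pow_zero]
    exact_mod_cast hle
  rcases (show k = 1 ∨ 2 ≤ k by omega) with rfl | hk2
  · have h1 := eq_empty_of_moonflowerFree_one hMF
    have hF : F ⊆ {∅} := fun S hS => Finset.mem_singleton.2 (h1 S hS)
    have hle := Finset.card_le_card hF
    simp only [Finset.card_singleton] at hle
    have hw1 : w = 1 := by omega
    subst hw1
    have : (F.card : ℝ) ≤ 1 := by exact_mod_cast hle
    calc (F.card : ℝ) ≤ 1 := this
      _ ≤ (312 * (1:ℕ) / (1:ℕ)) ^ 1 := by norm_num
  -- main case : 2 ≤ k, 1 ≤ w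
  have hw1 : 1 ≤ w := hw0
  -- split by layers
  have hsplit : F.card = ∑ s ∈ Finset.range (w+1), (F.filter (fun S => S.card = s)).card := by
    apply Finset.card_eq_sum_card_fiberwise
    intro S hS
    rw [Finset.mem_coe, Finset.mem_range]
    have := hcard S hS
    omega
  have hsplitR : (F.card : ℝ)
      = ∑ s ∈ Finset.range (w+1), ((F.filter (fun S => S.card = s)).card : ℝ) := by
    rw [hsplit]
    push_cast
    rfl
  -- layer 0
  have hlayer0 : ((F.filter (fun S => S.card = 0)).card : ℝ) ≤ 1 := by
    have : (F.filter (fun S => S.card = 0)).card ≤ 1 := by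
      apply Finset.card_le_one.2
      intro S hS T hT
      rw [Finset.mem_filter] at hS hT
      rw [Finset.card_eq_zero.1 hS.2, Finset.card_eq_zero.1 hT.2]
    exact_mod_cast this
  -- positive layers
  have hlayers : ∀ i ∈ Finset.range w,
      ((F.filter (fun S => S.card = i+1)).card : ℝ)
        ≤ 12 * 4^w * (((k-1+(i+1)).choose (i+1) : ℕ) : ℝ) := by
    intro i hi
    rw [Finset.mem_range] at hi
    calc ((F.filter (fun S => S.card = i+1)).card : ℝ)
        ≤ 12 * 4^(i+1) * (((k-1+(i+1)).choose (i+1) : ℕ) : ℝ) :=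
          layer_bound hk2 (by omega) hMF
      _ ≤ 12 * 4^w * (((k-1+(i+1)).choose (i+1) : ℕ) : ℝ) := by
          apply mul_le_mul_of_nonneg_right _ (by positivity)
          apply mul_le_mul_of_nonneg_left _ (by norm_num)
          apply pow_le_pow_right₀ (by norm_num)
          omega
  -- sum the layers
  have hhky := hockey k (by omega) w
  have hsum2 : ∑ i ∈ Finset.range w, (((k-1+(i+1)).choose (i+1) : ℕ) : ℝ)
      ≤ (((k+w).choose w : ℕ) : ℝ) := by
    rw [← hhky]
    push_cast
    rw [Finset.sum_range_succ']
    have : (0:ℝ) ≤ (((k-1+0).choose 0 : ℕ) : ℝ) := by positivity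
    push_cast at this ⊢
    linarith
  have hmain : (F.card : ℝ) ≤ 1 + 12 * 4^w * (((k+w).choose w : ℕ) : ℝ) := by
    rw [hsplitR, Finset.sum_range_succ']
    have hbound : ∑ i ∈ Finset.range w, ((F.filter (fun S => S.card = i+1)).card : ℝ)
        ≤ 12 * 4^w * (((k+w).choose w : ℕ) : ℝ) := by
      calc ∑ i ∈ Finset.range w, ((F.filter (fun S => S.card = i+1)).card : ℝ)
          ≤ ∑ i ∈ Finset.range w, 12 * 4^w * (((k-1+(i+1)).choose (i+1) : ℕ) : ℝ) :=
            Finset.sum_le_sum hlayers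
        _ = 12 * 4^w * ∑ i ∈ Finset.range w, (((k-1+(i+1)).choose (i+1) : ℕ) : ℝ) := by
            rw [Finset.mul_sum]
        _ ≤ 12 * 4^w * (((k+w).choose w : ℕ) : ℝ) := by
            apply mul_le_mul_of_nonneg_left hsum2 (by positivity)
    linarith
  -- final numeric chain
  have hchoose := choose_add_le k w hw1 hwk
  have hch_nonneg : (0:ℝ) ≤ (((k+w).choose w : ℕ) : ℝ) := by positivity
  have hch_ge1 : (1:ℝ) ≤ 4^w * (((k+w).choose w : ℕ) : ℝ) := by
    have h1 : (1:ℕ) ≤ (k+w).choose w := Nat.choose_pos (by omega)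
    have h1R : (1:ℝ) ≤ (((k+w).choose w : ℕ) : ℝ) := by exact_mod_cast h1
    have h2 : (1:ℝ) ≤ 4^w := one_le_pow₀ (by norm_num)
    nlinarith
  have hkw_nonneg : (0:ℝ) ≤ 24*(k:ℝ)/w := by positivity
  calc (F.card : ℝ) ≤ 1 + 12 * 4^w * (((k+w).choose w : ℕ) : ℝ) := hmain
    _ ≤ 13 * 4^w * (((k+w).choose w : ℕ) : ℝ) := by nlinarith
    _ ≤ 13 * 4^w * (6*(k:ℝ)/w)^w := by
        apply mul_le_mul_of_nonneg_left hchoose (by positivity)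
    _ = 13 * (24*(k:ℝ)/w)^w := by
        rw [show (24*(k:ℝ)/w)^w = (4 * (6*(k:ℝ)/w))^w from by ring_nf, mul_pow]
        ring
    _ ≤ 13^w * (24*(k:ℝ)/w)^w := by
        apply mul_le_mul_of_nonneg_right _ (by positivity)
        exact le_self_pow₀ (by norm_num) (by omega)
    _ = (13 * (24*(k:ℝ)/w))^w := (mul_pow _ _ _).symm
    _ = (312 * (k:ℝ) / w) ^ w := by
        congr 1
        ring
end
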